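/- arXiv:2107.12459 — 6 statements merged into one kernel-verified Lean document; each statement's English description precedes it below -/
import Mathlib

section
/- Let σ be a permutation of [n] = {1,…,n}, let k be an integer with 1 ≤ k ≤ n−1, and let i ∈ [n] be a position. Then the value σ(i) is a k-peak of σ (in the sense of maximal k-ascending/k-descending sections) if and only if both of the following hold: (i) for every position s > i with σ(s) > σ(i) there is a position j with i < j ≤ s and σ(i) − σ(j) ≥ k; and (ii) for every position s < i with σ(s) > σ(i) there is a position j with s ≤ j < i and σ(i) − σ(j) ≥ k. -/
open Filter

namespace PaperKAlt

/-- `i` (a value in `Fin n`, 0-indexed) is a `k`-peak of the permutation `σ`.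
The paper's 1-indexed condition `σ(j) ≤ i − k` is rendered as `σ j + k ≤ i`,
which is equivalent for positive integers and invariant under the shift to 0-indexing. -/
def IsKPeak (n k : ℕ) (σ : Equiv.Perm (Fin n)) (i : Fin n) : Prop :=
  (∀ s : Fin n, σ.symm i < s → i < σ s →
      ∃ j : Fin n, σ.symm i < j ∧ j ≤ s ∧ (σ j : ℕ) + k ≤ (i : ℕ)) ∧
  (∀ s : Fin n, s < σ.symm i → i < σ s →
      ∃ j : Fin n, s ≤ j ∧ j < σ.symm i ∧ (σ j : ℕ) + k ≤ (i : ℕ))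

/-- The number of `k`-peaks of `σ`. -/
noncomputable def numKPeaks (n k : ℕ) (σ : Equiv.Perm (Fin n)) : ℕ :=
  Nat.card {i : Fin n // IsKPeak n k σ i}

/-- `i` is a local `k`-peak of `σ` with window `m`. -/
def IsLocalKPeak (n k m : ℕ) (σ : Equiv.Perm (Fin n)) (i : Fin n) : Prop :=
  ((∃ j : Fin n, σ.symm i < j ∧ (j : ℕ) ≤ (σ.symm i : ℕ) + m ∧ (σ j : ℕ) + k ≤ (i : ℕ) ∧
      ∀ s : Fin n, σ.symm i ≤ s → s ≤ j → σ s ≤ i ∧ σ j ≤ σ s) ∨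
    (n ≤ (σ.symm i : ℕ) + m + 1 ∧ ∀ s : Fin n, σ.symm i ≤ s → σ s ≤ i)) ∧
  ((∃ j : Fin n, j < σ.symm i ∧ (σ.symm i : ℕ) ≤ (j : ℕ) + m ∧ (σ j : ℕ) + k ≤ (i : ℕ) ∧
      ∀ s : Fin n, j ≤ s → s ≤ σ.symm i → σ s ≤ i ∧ σ j ≤ σ s) ∨
    ((σ.symm i : ℕ) ≤ m ∧ ∀ s : Fin n, s ≤ σ.symm i → σ s ≤ i))

/-- The number of local `k`-peaks of `σ` with window `m`. -/
noncomputable def numLocalKPeaks (n k m : ℕ) (σ : Equiv.Perm (Fin n)) : ℕ :=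
  Nat.card {i : Fin n // IsLocalKPeak n k m σ i}

/-- `AltChain n k σ b l` : the list of positions `l` is strictly increasing and the
values of `σ` along it alternate, with a descent of size at least `k` first when
`b = true` (an ascent first when `b = false`). -/
def AltChain (n k : ℕ) (σ : Equiv.Perm (Fin n)) : Bool → List (Fin n) → Prop
  | _, [] => True
  | _, [_] => True
  | b, x :: y :: l =>
      x < y ∧
        (if b then (σ y : ℕ) + k ≤ (σ x : ℕ) else (σ x : ℕ) + k ≤ (σ y : ℕ)) ∧
        AltChain n k σ (!b) (y :: l)

/-- The length of the longest `k`-alternating subsequence of `σ`. -/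
noncomputable def asLen (n k : ℕ) (σ : Equiv.Perm (Fin n)) : ℕ :=
  sSup {t : ℕ | ∃ l : List (Fin n), AltChain n k σ true l ∧ l.length = t}

/-- The length of the longest `k`-zigzagging subsequence of `σ` : the max of the
longest `k`-alternating subsequence of `σ` and of its vertical flip. -/
noncomputable def zsLen (n k : ℕ) (σ : Equiv.Perm (Fin n)) : ℕ :=
  max (asLen n k σ) (asLen n k (σ.trans Fin.revPerm))

/-- Expectation of `f` under the uniform measure on permutations of `Fin n`. -/
noncomputable def pexp (n : ℕ) (f : Equiv.Perm (Fin n) → ℝ) : ℝ :=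
  (∑ σ : Equiv.Perm (Fin n), f σ) / (Fintype.card (Equiv.Perm (Fin n)))

/-- Variance of `f` under the uniform measure on permutations of `Fin n`. -/
noncomputable def pvar (n : ℕ) (f : Equiv.Perm (Fin n) → ℝ) : ℝ :=
  pexp n (fun σ => (f σ - pexp n f) ^ 2)

/-- Probability of the event `A` under the uniform measure on permutations of `Fin n`. -/
noncomputable def pprob (n : ℕ) (A : Equiv.Perm (Fin n) → Prop) : ℝ :=
  (Nat.card {σ : Equiv.Perm (Fin n) // A σ} : ℝ) / (Fintype.card (Equiv.Perm (Fin n)))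

/-- The cumulative distribution function of the standard normal distribution. -/
noncomputable def stdGaussCDF (t : ℝ) : ℝ :=
  ∫ x in Set.Iic t, Real.exp (-(x ^ 2) / 2) / Real.sqrt (2 * Real.pi)

/-- The (contiguous) section of `σ` from position `a` to position `b` is `k`-ascending. -/
def IsKAscSection (n k : ℕ) (σ : Equiv.Perm (Fin n)) (a b : Fin n) : Prop :=
  a < b ∧
  (∀ s : Fin n, a ≤ s → s ≤ b → σ a ≤ σ s ∧ σ s ≤ σ b) ∧
  (σ a : ℕ) + k ≤ (σ b : ℕ) ∧
  (∀ s t : Fin n, a ≤ s → s < t → t ≤ b → (σ s : ℕ) < (σ t : ℕ) + k)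

/-- The section from `a` to `b` is a maximal `k`-ascending section. -/
def IsMaxKAscSection (n k : ℕ) (σ : Equiv.Perm (Fin n)) (a b : Fin n) : Prop :=
  IsKAscSection n k σ a b ∧
  ∀ a' b' : Fin n, IsKAscSection n k σ a' b' → a' ≤ a → b ≤ b' → a' = a ∧ b' = b

/-- The (contiguous) section of `σ` from position `a` to position `b` is `k`-descending. -/
def IsKDescSection (n k : ℕ) (σ : Equiv.Perm (Fin n)) (a b : Fin n) : Prop :=
  a < b ∧
  (∀ s : Fin n, a ≤ s → s ≤ b → σ b ≤ σ s ∧ σ s ≤ σ a) ∧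
  (σ b : ℕ) + k ≤ (σ a : ℕ) ∧
  (∀ s t : Fin n, a ≤ s → s < t → t ≤ b → (σ t : ℕ) < (σ s : ℕ) + k)

/-- The section from `a` to `b` is a maximal `k`-descending section. -/
def IsMaxKDescSection (n k : ℕ) (σ : Equiv.Perm (Fin n)) (a b : Fin n) : Prop :=
  IsKDescSection n k σ a b ∧
  ∀ a' b' : Fin n, IsKDescSection n k σ a' b' → a' ≤ a → b ≤ b' → a' = a ∧ b' = b

/-- The value `σ i` (at position `i`) is a `k`-peak in the sense of maximal
`k`-ascending/`k`-descending sections. -/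
def IsKPeakAtPos (n k : ℕ) (σ : Equiv.Perm (Fin n)) (i : Fin n) : Prop :=
  (∃ a : Fin n, IsMaxKAscSection n k σ a i) ∨ (∃ b : Fin n, IsMaxKDescSection n k σ i b)

/-!
Given (ii) and a position p < i with σ(p) + k ≤ σ(i), let j₀ be the last such position: by (ii)
no value in [j₀, i] exceeds σ(i), so the section from the minimum of [j₀, i] to i is
k-ascending, and (i) says exactly that no k-ascending section through i ends beyond i; a
minimal start then makes it maximal. Conversely, if (i) failed for a maximal section ending at
i, the first larger value after i would extend it. Reading σ backwards turns k-descending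
sections starting at i into k-ascending ones ending at i and swaps (i) and (ii). Finally (i)
and (ii), applied to the position of the largest value, force σ(i) ≥ k, so a k-drop below σ(i)
occurs on one side of i.
-/

def KDropBeforeRiseRight {n : ℕ} (k : ℕ) (σ : Equiv.Perm (Fin n)) (i : Fin n) : Prop :=
  ∀ s, i < s → σ i < σ s → ∃ j, i < j ∧ j ≤ s ∧ (σ j : ℕ) + k ≤ σ i

def KDropBeforeRiseLeft {n : ℕ} (k : ℕ) (σ : Equiv.Perm (Fin n)) (i : Fin n) : Prop :=
  ∀ s, s < i → σ i < σ s → ∃ j, s ≤ j ∧ j < i ∧ (σ j : ℕ) + k ≤ σ i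

section Ascending

variable {n k : ℕ} {σ : Equiv.Perm (Fin n)} {a i : Fin n}

theorem IsKAscSection.kDropBeforeRiseLeft (h : IsKAscSection n k σ a i) :
    KDropBeforeRiseLeft k σ i := by
  intro s hsi hrise
  have hsa : s < a := by
    by_contra! has
    exact (hrise.trans_le (h.2.1 s has hsi.le).2).false
  exact ⟨a, hsa.le, h.1, h.2.2.1⟩

theorem IsKAscSection.extend_right (h : IsKAscSection n k σ a i) {b : Fin n} (hib : i < b)
    (hrise : σ i < σ b) (hbelow : ∀ t, i < t → t < b → σ t < σ i)
    (hnodrop : ∀ t, i < t → t ≤ b → (σ i : ℕ) < σ t + k) :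
    IsKAscSection n k σ a b := by
  obtain ⟨hai, hbound, hgap, hnd⟩ := h
  have hbelow' : ∀ t, a ≤ t → t < b → σ t ≤ σ i := fun t hat htb =>
    (le_or_gt t i).elim (fun hti => (hbound t hat hti).2) fun hit => (hbelow t hit htb).le
  refine ⟨hai.trans hib, fun t hat htb => ?_, hgap.trans (Fin.lt_def.1 hrise).le, ?_⟩
  · rcases le_or_gt t i with hti | hit
    · exact ⟨(hbound t hat hti).1, (hbound t hat hti).2.trans hrise.le⟩
    · have := hnodrop t hit htb
      refine ⟨Fin.le_def.2 (by omega), ?_⟩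
      rcases htb.lt_or_eq with htb | rfl
      exacts [(hbelow t hit htb).le.trans hrise.le, le_rfl]
  · intro u v hau huv hvb
    rcases le_or_gt v i with hvi | hiv
    · exact hnd u v hau huv hvi
    · have := Fin.le_def.1 (hbelow' u hau (huv.trans_le hvb))
      have := hnodrop v hiv hvb
      omega

theorem IsMaxKAscSection.kDropBeforeRiseRight (h : IsMaxKAscSection n k σ a i) :
    KDropBeforeRiseRight k σ i := by
  intro s his hrise
  by_contra! hnodrop
  obtain ⟨b, ⟨hib, hriseb⟩, hbmin⟩ :=
    wellFounded_lt.has_min {t | i < t ∧ σ i < σ t} ⟨s, his, hrise⟩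
  have hbs : b ≤ s := not_lt.1 (hbmin s ⟨his, hrise⟩)
  have hbelow : ∀ t, i < t → t < b → σ t < σ i := fun t hit htb =>
    (lt_or_gt_of_ne (σ.injective.ne hit.ne')).resolve_right fun hlt => hbmin t ⟨hit, hlt⟩ htb
  have hext := h.1.extend_right hib hriseb hbelow fun t hit htb => hnodrop t hit (htb.trans hbs)
  exact hib.ne' (h.2 a b hext le_rfl hib.le).2

theorem KDropBeforeRiseRight.eq_of_isKAscSection (hR : KDropBeforeRiseRight k σ i) {b : Fin n}
    (h : IsKAscSection n k σ a b) (hai : a ≤ i) (hib : i ≤ b) : b = i := by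
  by_contra hbi
  have hib : i < b := lt_of_le_of_ne hib (Ne.symm hbi)
  have hrise : σ i < σ b := lt_of_le_of_ne (h.2.1 i hai hib.le).2 (σ.injective.ne hib.ne)
  obtain ⟨j, hij, hjb, hdrop⟩ := hR b hib hrise
  have := h.2.2.2 i j hai hij hjb
  omega

theorem exists_isKAscSection_of_kDropBeforeRiseLeft (hk : 1 ≤ k)
    (hL : KDropBeforeRiseLeft k σ i) {p : Fin n} (hpi : p < i) (hp : (σ p : ℕ) + k ≤ σ i) :
    ∃ a, IsKAscSection n k σ a i := by
  obtain ⟨j₀, ⟨hj₀i, hj₀⟩, hj₀max⟩ :=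
    wellFounded_gt.has_min {j | j < i ∧ (σ j : ℕ) + k ≤ σ i} ⟨p, hpi, hp⟩
  have hbelow : ∀ t, j₀ ≤ t → t ≤ i → σ t ≤ σ i := by
    intro t hj₀t hti
    by_contra! hrise
    have hti : t < i := lt_of_le_of_ne hti (by rintro rfl; exact hrise.false)
    obtain ⟨j, htj, hji, hdrop⟩ := hL t hti hrise
    exact hj₀max j ⟨hji, hdrop⟩ (hj₀t.trans_lt (lt_of_le_of_ne htj (by
      rintro rfl; have := Fin.lt_def.1 hrise; omega)))
  obtain ⟨a, ha, hamin⟩ := Finset.exists_min_image (Finset.Icc j₀ i) (fun t => (σ t : ℕ))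
    ⟨i, Finset.mem_Icc.2 ⟨hj₀i.le, le_rfl⟩⟩
  rw [Finset.mem_Icc] at ha
  have haj₀ : (σ a : ℕ) ≤ σ j₀ := hamin j₀ (Finset.mem_Icc.2 ⟨le_rfl, hj₀i.le⟩)
  refine ⟨a, lt_of_le_of_ne ha.2 (by rintro rfl; omega), fun t hat hti => ?_, by omega, ?_⟩
  · exact ⟨Fin.le_def.2 (hamin t (Finset.mem_Icc.2 ⟨ha.1.trans hat, hti⟩)),
      hbelow t (ha.1.trans hat) hti⟩
  · intro u v hau huv hvi
    by_contra! hdrop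
    have hu := Fin.le_def.1 (hbelow u (ha.1.trans hau) (huv.le.trans hvi))
    have hvi : v < i := lt_of_le_of_ne hvi (by rintro rfl; omega)
    exact hj₀max v ⟨hvi, by omega⟩ ((ha.1.trans hau).trans_lt huv)

theorem exists_isMaxKAscSection_iff (hk : 1 ≤ k) :
    (∃ a, IsMaxKAscSection n k σ a i) ↔
      KDropBeforeRiseRight k σ i ∧ KDropBeforeRiseLeft k σ i ∧
        ∃ p < i, (σ p : ℕ) + k ≤ σ i := by
  constructor
  · rintro ⟨a, h⟩
    exact ⟨h.kDropBeforeRiseRight, h.1.kDropBeforeRiseLeft, a, h.1.1, h.1.2.2.1⟩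
  · rintro ⟨hR, hL, p, hpi, hp⟩
    obtain ⟨a₀, ha₀, hmin⟩ := wellFounded_lt.has_min {a | IsKAscSection n k σ a i}
      (exists_isKAscSection_of_kDropBeforeRiseLeft hk hL hpi hp)
    refine ⟨a₀, ha₀, fun a b h ha hb => ?_⟩
    obtain rfl := hR.eq_of_isKAscSection h (ha.trans ha₀.1.le) hb
    exact ⟨le_antisymm ha (not_lt.1 (hmin a h)), rfl⟩

end Ascending

section Reversal

variable {n k : ℕ} {σ : Equiv.Perm (Fin n)}

theorem isKDescSection_iff_rev {a b : Fin n} :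
    IsKDescSection n k σ a b ↔ IsKAscSection n k (Fin.revPerm.trans σ) b.rev a.rev := by
  simp only [IsKDescSection, IsKAscSection, Equiv.trans_apply, Fin.revPerm_apply, Fin.rev_rev,
    Fin.rev_lt_rev]
  constructor
  · rintro ⟨hab, hbound, hgap, hnoup⟩
    refine ⟨hab, fun s hbs hsa => ?_, hgap, fun s t hbs hst hta => ?_⟩
    · exact hbound s.rev (Fin.le_rev_iff.1 hsa) (Fin.rev_le_iff.1 hbs)
    · exact hnoup t.rev s.rev (Fin.le_rev_iff.1 hta) (Fin.rev_lt_rev.2 hst) (Fin.rev_le_iff.1 hbs)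
  · rintro ⟨hab, hbound, hgap, hnodown⟩
    refine ⟨hab, fun s has hsb => ?_, hgap, fun s t has hst htb => ?_⟩
    · simpa using hbound s.rev (Fin.rev_le_rev.2 hsb) (Fin.rev_le_rev.2 has)
    · simpa using hnodown t.rev s.rev (Fin.rev_le_rev.2 htb) (Fin.rev_lt_rev.2 hst)
        (Fin.rev_le_rev.2 has)

theorem isMaxKDescSection_iff_rev {a b : Fin n} :
    IsMaxKDescSection n k σ a b ↔ IsMaxKAscSection n k (Fin.revPerm.trans σ) b.rev a.rev := by
  simp only [IsMaxKDescSection, IsMaxKAscSection, isKDescSection_iff_rev]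
  refine and_congr Iff.rfl ⟨fun h a' b' h' ha' hb' => ?_, fun h a' b' h' ha' hb' => ?_⟩
  · obtain ⟨rfl, rfl⟩ :=
      h b'.rev a'.rev (by simpa using h') (Fin.rev_le_iff.1 hb') (Fin.le_rev_iff.1 ha')
    simp
  · obtain ⟨hb, ha⟩ := h b'.rev a'.rev h' (Fin.rev_le_rev.2 hb') (Fin.rev_le_rev.2 ha')
    exact ⟨Fin.rev_injective ha, Fin.rev_injective hb⟩

theorem kDropBeforeRiseLeft_rev_iff {i : Fin n} :
    KDropBeforeRiseLeft k (Fin.revPerm.trans σ) i.rev ↔ KDropBeforeRiseRight k σ i := by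
  simp only [KDropBeforeRiseLeft, KDropBeforeRiseRight, Equiv.trans_apply, Fin.revPerm_apply,
    Fin.rev_rev]
  constructor
  · intro h s his hrise
    obtain ⟨j, hsj, hji, hdrop⟩ := h s.rev (Fin.rev_lt_rev.2 his) (by simpa using hrise)
    exact ⟨j.rev, Fin.lt_rev_iff.2 hji, Fin.rev_le_iff.2 hsj, hdrop⟩
  · intro h s hsi hrise
    obtain ⟨j, hij, hjs, hdrop⟩ := h s.rev (Fin.lt_rev_iff.2 hsi) hrise
    exact ⟨j.rev, Fin.le_rev_iff.2 hjs, Fin.rev_lt_rev.2 hij, by simpa using hdrop⟩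

theorem kDropBeforeRiseRight_rev_iff {i : Fin n} :
    KDropBeforeRiseRight k (Fin.revPerm.trans σ) i.rev ↔ KDropBeforeRiseLeft k σ i := by
  have hrev : Fin.revPerm.trans (Fin.revPerm.trans σ) = σ := Equiv.ext fun x => by simp
  simpa only [hrev, Fin.rev_rev] using
    (kDropBeforeRiseLeft_rev_iff (σ := Fin.revPerm.trans σ) (i := i.rev)).symm

theorem exists_isMaxKDescSection_iff (hk : 1 ≤ k) {i : Fin n} :
    (∃ b, IsMaxKDescSection n k σ i b) ↔
      KDropBeforeRiseRight k σ i ∧ KDropBeforeRiseLeft k σ i ∧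
        ∃ p, i < p ∧ (σ p : ℕ) + k ≤ σ i := by
  have hrev : (∃ b, IsMaxKDescSection n k σ i b) ↔
      ∃ a, IsMaxKAscSection n k (Fin.revPerm.trans σ) a i.rev :=
    ⟨fun ⟨b, h⟩ => ⟨b.rev, isMaxKDescSection_iff_rev.1 h⟩,
      fun ⟨a, h⟩ => ⟨a.rev, isMaxKDescSection_iff_rev.2 (by simpa using h)⟩⟩
  rw [hrev, exists_isMaxKAscSection_iff hk, kDropBeforeRiseLeft_rev_iff,
    kDropBeforeRiseRight_rev_iff, and_left_comm]
  refine and_congr_right' (and_congr_right' ⟨fun ⟨p, hpi, hp⟩ => ⟨p.rev, ?_, ?_⟩,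
    fun ⟨p, hip, hp⟩ => ⟨p.rev, ?_, ?_⟩⟩) <;> simp_all [Fin.lt_rev_iff]

end Reversal

theorem exists_ne_kDrop {n k : ℕ} (hk : 1 ≤ k) (hkn : k ≤ n - 1) {σ : Equiv.Perm (Fin n)}
    {i : Fin n} (hR : KDropBeforeRiseRight k σ i) (hL : KDropBeforeRiseLeft k σ i) :
    ∃ p ≠ i, (σ p : ℕ) + k ≤ σ i := by
  have hki : k ≤ (σ i : ℕ) := by
    by_contra! hik
    obtain ⟨s, hs⟩ : ∃ s, (σ s : ℕ) = n - 1 := ⟨σ.symm ⟨n - 1, by omega⟩, by simp⟩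
    have hrise : σ i < σ s := Fin.lt_def.2 (by omega)
    rcases lt_or_gt_of_ne (show s ≠ i by rintro rfl; omega) with hsi | his
    · obtain ⟨j, -, -, hj⟩ := hL s hsi hrise
      omega
    · obtain ⟨j, -, -, hj⟩ := hR s his hrise
      omega
  obtain ⟨p, hp⟩ : ∃ p, (σ p : ℕ) = σ i - k := ⟨σ.symm ⟨σ i - k, by omega⟩, by simp⟩
  exact ⟨p, by rintro rfl; omega, by omega⟩

/-- characterization of `k`-peaks (Proposition 1 of the paper). -/
theorem kpeak_characterization (n k : ℕ) (hk : 1 ≤ k) (hkn : k ≤ n - 1)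
    (σ : Equiv.Perm (Fin n)) (i : Fin n) :
    IsKPeakAtPos n k σ i ↔
      ((∀ s : Fin n, i < s → σ i < σ s →
          ∃ j : Fin n, i < j ∧ j ≤ s ∧ (σ j : ℕ) + k ≤ (σ i : ℕ)) ∧
       (∀ s : Fin n, s < i → σ i < σ s →
          ∃ j : Fin n, s ≤ j ∧ j < i ∧ (σ j : ℕ) + k ≤ (σ i : ℕ))) := by
  change _ ↔ KDropBeforeRiseRight k σ i ∧ KDropBeforeRiseLeft k σ i
  rw [IsKPeakAtPos, exists_isMaxKAscSection_iff hk, exists_isMaxKDescSection_iff hk]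
  constructor
  · rintro (⟨hR, hL, -⟩ | ⟨hR, hL, -⟩) <;> exact ⟨hR, hL⟩
  · rintro ⟨hR, hL⟩
    obtain ⟨p, hpi, hp⟩ := exists_ne_kDrop hk hkn hR hL
    rcases lt_or_gt_of_ne hpi with hpi | hip
    exacts [Or.inl ⟨hR, hL, p, hpi, hp⟩, Or.inr ⟨hR, hL, p, hip, hp⟩]

end PaperKAlt
end

section
/- For all integers n and k with 1 ≤ k ≤ n − 1, the expected number of k-peaks of a uniformly random permutation of [n] equals (n − k + 2)/3. -/
open Filter

namespace PaperKAlt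

/-!
Values `i < k` are never `k`-peaks, as there is no value `≤ i - k` to separate `i` from `n - 1`.
For `i ≥ k` let `T` be the set of values `v` with `v ≤ i - k` or `v ≥ i`; it has `m = n - k + 1`
elements and `i` has rank `i - k + 1` in it. Whether `i` is a `k`-peak of `σ` depends only on the
relative order in which `σ` places the values of `T`: it holds iff in this pattern the entries next
to `i` are smaller than `i`, i.e. `i` is a peak of the pattern (the ends counting as `-∞`).
Relabelling the values of `T` permutes the patterns, so the pattern of a uniform `σ` is uniform on
`S_m`, and summing over `i` the expected number of `k`-peaks becomes the expected number of peaks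
of a uniform permutation of `m` letters. A position is a peak when it carries the largest of the
values on it and on its neighbours, which by symmetry happens with probability `1/2` at the two
ends and `1/3` elsewhere, for a total of `(m + 1) / 3 = (n - k + 2) / 3`.
-/

open Equiv Finset

theorem card_filter_comp_mul_card {G H : Type*} [Group G] [Group H] [Fintype G] [Fintype H]
    (f : G → H) (ψ : H → G) (hf : ∀ u x, f (ψ u * x) = u * f x)
    (p : H → Prop) [DecidablePred p] :
    #{x | p (f x)} * Fintype.card H = Fintype.card G * #{u | p u} := by
  calc #{x | p (f x)} * Fintype.card H
      = ∑ u : H, #{x | p (u * f x)} := by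
        rw [sum_congr rfl fun u _ => ?_, sum_const, card_univ, smul_eq_mul, mul_comm]
        simp_rw [← hf, card_filter]
        exact Equiv.sum_comp (Equiv.mulLeft (ψ u)) fun x => if p (f x) then 1 else 0
    _ = ∑ x : G, #{u | p (u * f x)} := by simp only [card_filter]; exact sum_comm
    _ = ∑ _x : G, #{u | p u} := by
        refine sum_congr rfl fun x _ => ?_
        simp only [card_filter]
        exact Equiv.sum_comp (Equiv.mulRight (f x)) fun u => if p u then 1 else 0
    _ = Fintype.card G * #{u | p u} := by rw [sum_const, card_univ, smul_eq_mul]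

theorem card_mul_card_filter_forall_le {α : Type*} [Fintype α] [LinearOrder α]
    {B : Finset α} {a : α} (ha : a ∈ B) :
    #B * #{u : Perm α | ∀ r ∈ B, u r ≤ u a} = (Fintype.card α).factorial := by
  have hsymm : ∀ b ∈ B,
      #{u : Perm α | ∀ r ∈ B, u r ≤ u b} = #{u : Perm α | ∀ r ∈ B, u r ≤ u a} := by
    intro b hb
    have hB : ∀ r ∈ B, swap a b r ∈ B := fun r hr => by
      rw [swap_apply_def]; split_ifs <;> assumption
    simp only [card_filter]
    refine (Equiv.sum_comp (Equiv.mulRight (swap a b)) _).symm.trans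
      (sum_congr rfl fun u _ => ?_)
    simp only [coe_mulRight, Perm.mul_apply, swap_apply_right]
    congr 1
    refine propext ⟨fun h r hr => ?_, fun h r hr => h _ (hB r hr)⟩
    simpa using h _ (hB r hr)
  have hunique (u : Perm α) : #{b ∈ B | ∀ r ∈ B, u r ≤ u b} = 1 := by
    obtain ⟨b, hb, hmax⟩ := B.exists_max_image u ⟨a, ha⟩
    refine card_eq_one.mpr ⟨b, eq_singleton_iff_unique_mem.mpr ⟨mem_filter.mpr ⟨hb, hmax⟩, ?_⟩⟩
    intro c hc
    rw [mem_filter] at hc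
    exact u.injective (le_antisymm (hmax c hc.1) (hc.2 b hb))
  calc #B * #{u : Perm α | ∀ r ∈ B, u r ≤ u a}
      = ∑ b ∈ B, #{u : Perm α | ∀ r ∈ B, u r ≤ u b} := by
        rw [sum_congr rfl hsymm, sum_const, smul_eq_mul]
    _ = ∑ u : Perm α, #{b ∈ B | ∀ r ∈ B, u r ≤ u b} := by
        simp only [card_filter]; exact sum_comm
    _ = (Fintype.card α).factorial := by
        simp [hunique, Fintype.card_perm]

section Shielded

variable {ι : Type*} [LinearOrder ι]

def Shielded (high low : ι → Prop) (p : ι) : Prop :=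
  ∀ s, high s → ∃ j, low j ∧ j ≠ p ∧ j ∈ Set.uIcc p s

theorem shielded_comp_iff {κ : Type*} [LinearOrder κ] (q : κ ↪o ι) {high low : ι → Prop}
    (hhigh : ∀ s, high s → s ∈ Set.range q) (hlow : ∀ j, low j → j ∈ Set.range q) (a : κ) :
    Shielded high low (q a) ↔ Shielded (high ∘ q) (low ∘ q) a := by
  have huIcc (j s : κ) : q j ∈ Set.uIcc (q a) (q s) ↔ j ∈ Set.uIcc a s := by
    simp [Set.mem_uIcc]
  constructor
  · intro h s hs
    obtain ⟨_, hj, hja, hjs⟩ := h (q s) hs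
    obtain ⟨j, rfl⟩ := hlow _ hj
    exact ⟨j, hj, fun h => hja (congrArg q h), (huIcc j s).mp hjs⟩
  · intro h s hs
    obtain ⟨s, rfl⟩ := hhigh s hs
    obtain ⟨j, hj, hja, hjs⟩ := h s hs
    exact ⟨q j, hj, q.injective.ne hja, (huIcc j s).mpr hjs⟩

theorem shielded_iff_forall_covBy [LocallyFiniteOrder ι] {high low : ι → Prop} {p : ι}
    (hp : ¬ high p) (hdich : ∀ s ≠ p, high s ∨ low s) :
    Shielded high low p ↔ ∀ r, p ⋖ r ∨ r ⋖ p → low r := by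
  constructor
  · intro h r hr
    by_contra hr'
    have hrp : r ≠ p := by rcases hr with hr | hr; exacts [hr.ne', hr.ne]
    obtain ⟨j, hj, hjp, hjr⟩ := h r ((hdich r hrp).resolve_right hr')
    have : j = r := by
      rcases hr with hr | hr
      · rw [Set.uIcc_of_le hr.le, hr.Icc_eq] at hjr
        simpa [hjp] using hjr
      · rw [Set.uIcc_of_ge hr.le, hr.Icc_eq] at hjr
        simpa [hjp] using hjr
    exact hr' (this ▸ hj)
  · intro h s hs
    have hsp : s ≠ p := by rintro rfl; exact hp hs
    rcases hsp.lt_or_gt with hsp | hps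
    · obtain ⟨r, hsr, hrp⟩ := exists_le_covBy_of_lt hsp
      exact ⟨r, h r (Or.inr hrp), hrp.ne, Set.mem_uIcc.mpr (Or.inr ⟨hsr, hrp.le⟩)⟩
    · obtain ⟨r, hpr, hrs⟩ := exists_covBy_le_of_lt hps
      exact ⟨r, h r (Or.inl hpr), hpr.ne', Set.mem_uIcc.mpr (Or.inl ⟨hpr.le, hrs⟩)⟩

end Shielded

section Peaks

variable {m : ℕ}

def IsPeakAt (u : Perm (Fin m)) (ρ : Fin m) : Prop :=
  ∀ r, ρ ⋖ r ∨ r ⋖ ρ → u r < u ρ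

theorem IsPeakAt.pos {u : Perm (Fin m)} {ρ : Fin m} (hm : 2 ≤ m) (h : IsPeakAt u ρ) :
    0 < (u ρ : ℕ) := by
  have := Fin.nontrivial_iff_two_le.mpr hm
  obtain ⟨s, hs⟩ := exists_ne ρ
  obtain ⟨r, hr⟩ : ∃ r, ρ ⋖ r ∨ r ⋖ ρ := by
    rcases hs.lt_or_gt with hsρ | hρs
    · obtain ⟨r, -, hr⟩ := exists_le_covBy_of_lt hsρ
      exact ⟨r, Or.inr hr⟩
    · obtain ⟨r, hr, -⟩ := exists_covBy_le_of_lt hρs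
      exact ⟨r, Or.inl hr⟩
  exact Nat.zero_lt_of_lt (Fin.lt_def.mp (h r hr))

open scoped Classical

theorem card_mul_card_filter_isPeakAt {ρ : Fin m} {B : Finset (Fin m)}
    (hB : ∀ r, r ∈ B ↔ r = ρ ∨ ρ ⋖ r ∨ r ⋖ ρ) :
    #B * #{u : Perm (Fin m) | IsPeakAt u ρ} = m.factorial := by
  have hiff (u : Perm (Fin m)) : IsPeakAt u ρ ↔ ∀ r ∈ B, u r ≤ u ρ := by
    refine ⟨fun h r hr => ?_, fun h r hr => ?_⟩
    · rcases (hB r).mp hr with rfl | hr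
      exacts [le_rfl, (h r hr).le]
    · have hrρ : r ≠ ρ := by rcases hr with hr | hr; exacts [hr.ne', hr.ne]
      exact (h r ((hB r).mpr (Or.inr hr))).lt_of_ne (u.injective.ne hrρ)
  convert card_mul_card_filter_forall_le (α := Fin m) ((hB ρ).mpr (Or.inl rfl)) using 2
  · congr 1
    ext u
    simpa using hiff u
  · rw [Fintype.card_fin]

theorem three_mul_sum_card_filter_isPeakAt (hm : 2 ≤ m) :
    3 * ∑ ρ : Fin m, (#{u : Perm (Fin m) | IsPeakAt u ρ} : ℝ) = (m + 1) * m.factorial := by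
  have hdiv {ρ : Fin m} (B : Finset (Fin m)) (hB : ∀ r, r ∈ B ↔ r = ρ ∨ ρ ⋖ r ∨ r ⋖ ρ) :
      (#{u : Perm (Fin m) | IsPeakAt u ρ} : ℝ) = m.factorial / #B := by
    have hpos : (#B : ℝ) ≠ 0 := by
      exact_mod_cast (card_pos.mpr ⟨ρ, (hB ρ).mpr (Or.inl rfl)⟩).ne'
    rw [eq_div_iff hpos, mul_comm]
    exact_mod_cast card_mul_card_filter_isPeakAt hB
  obtain ⟨m, rfl⟩ : ∃ m', m = m' + 2 := ⟨m - 2, by omega⟩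
  rw [Fin.sum_univ_succ, Fin.sum_univ_castSucc,
    hdiv {0, 1} (by
      intro r
      simp only [mem_insert, mem_singleton, Fin.covBy_iff, Nat.covBy_iff_add_one_eq, Fin.ext_iff,
        Fin.val_zero, Fin.val_one]
      omega),
    hdiv {(Fin.last m).castSucc, Fin.last (m + 1)} (by
      intro r
      simp only [mem_insert, mem_singleton, Fin.covBy_iff, Nat.covBy_iff_add_one_eq, Fin.ext_iff,
        Fin.val_last, Fin.val_castSucc, Fin.succ_last]
      omega),
    sum_congr rfl fun j _ => hdiv {j.castSucc.castSucc, j.castSucc.succ, j.succ.succ} (by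
      intro r
      simp only [mem_insert, mem_singleton, Fin.covBy_iff, Nat.covBy_iff_add_one_eq, Fin.ext_iff,
        Fin.val_succ, Fin.val_castSucc]
      omega)]
  have h2 : #({0, 1} : Finset (Fin (m + 2))) = 2 := card_pair (by simp)
  have h2' : #({(Fin.last m).castSucc, Fin.last (m + 1)} : Finset (Fin (m + 2))) = 2 :=
    card_pair (by simp)
  have h3 (j : Fin m) :
      #({j.castSucc.castSucc, j.castSucc.succ, j.succ.succ} : Finset (Fin (m + 2))) = 3 := by
    rw [card_insert_of_notMem (by simp [Fin.ext_iff]; omega), card_pair (by simp [Fin.ext_iff])]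
  simp only [h2, h2', h3, sum_const, card_univ, Fintype.card_fin, nsmul_eq_mul]
  push_cast
  ring

theorem sum_card_filter_isPeakAt_symm :
    ∑ x : Fin m, #{u : Perm (Fin m) | IsPeakAt u (u.symm x)} =
      ∑ ρ : Fin m, #{u : Perm (Fin m) | IsPeakAt u ρ} := by
  simp only [card_filter]
  rw [sum_comm, sum_comm (γ := Fin m)]
  exact sum_congr rfl fun u _ => Equiv.sum_comp u.symm fun ρ => if IsPeakAt u ρ then 1 else 0

end Peaks

section Pattern

variable {α : Type*} [LinearOrder α] {T : Finset α} {m : ℕ} (hT : #T = m)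

/-- The relative order in which `σ` arranges the values of `T`: reading the positions that carry
a value of `T` from left to right, `pattern hT σ r` is the rank in `T` of the `r`-th value read. -/
noncomputable def pattern (σ : Perm α) : Perm (Fin m) :=
  ((T.map σ.symm.toEmbedding).orderIsoOfFin ((card_map _).trans hT)).toEquiv.trans
    ((σ.subtypeEquiv fun a => by rw [mem_map_equiv, symm_symm]).trans
      (T.orderIsoOfFin hT).toEquiv.symm)

theorem orderEmbOfFin_pattern (σ : Perm α) (r : Fin m) :
    T.orderEmbOfFin hT (pattern hT σ r) =
      σ ((T.map σ.symm.toEmbedding).orderEmbOfFin ((card_map _).trans hT) r) := by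
  rw [← coe_orderIsoOfFin_apply]
  simp [pattern, coe_orderIsoOfFin_apply]

noncomputable def liftPerm (u : Perm (Fin m)) : Perm α :=
  Perm.ofSubtype ((T.orderIsoOfFin hT).toEquiv.permCongr u)

theorem liftPerm_orderEmbOfFin (u : Perm (Fin m)) (x : Fin m) :
    liftPerm hT u (T.orderEmbOfFin hT x) = T.orderEmbOfFin hT (u x) := by
  rw [liftPerm, Perm.ofSubtype_apply_of_mem _ (orderEmbOfFin_mem T hT x)]
  simp [← coe_orderIsoOfFin_apply]

theorem map_symm_liftPerm_mul (u : Perm (Fin m)) (σ : Perm α) :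
    T.map (liftPerm hT u * σ).symm.toEmbedding = T.map σ.symm.toEmbedding := by
  ext a
  simp only [mem_map_equiv, symm_symm, Perm.mul_apply, liftPerm, Perm.ofSubtype_apply_mem_iff_mem]

theorem pattern_liftPerm_mul (u : Perm (Fin m)) (σ : Perm α) :
    pattern hT (liftPerm hT u * σ) = u * pattern hT σ := by
  ext r : 1
  apply (T.orderEmbOfFin hT).injective
  rw [Perm.mul_apply, ← liftPerm_orderEmbOfFin hT u (pattern hT σ r), orderEmbOfFin_pattern,
    orderEmbOfFin_pattern, Perm.mul_apply]
  simp only [map_symm_liftPerm_mul]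

theorem card_filter_pattern_mul_factorial [Fintype α] (p : Perm (Fin m) → Prop)
    [DecidablePred p] :
    #{σ : Perm α | p (pattern hT σ)} * m.factorial =
      (Fintype.card α).factorial * #{u | p u} := by
  simpa [Fintype.card_perm] using
    card_filter_comp_mul_card (pattern hT) (liftPerm hT) (pattern_liftPerm_mul hT) p

end Pattern

section Gap

def gapCompl (n k : ℕ) (i : Fin n) : Finset (Fin n) := {v | (v : ℕ) + k ≤ i ∨ i ≤ v}

def gapEmb {n : ℕ} (k : ℕ) (i : Fin n) (j : Fin (n - k + 1)) : Fin n :=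
  ⟨if (j : ℕ) ≤ i - k then j else j + k - 1, by
    have := i.isLt; have := j.isLt; split_ifs <;> omega⟩

variable {n k : ℕ} {i : Fin n}

theorem strictMono_gapEmb (hk : 1 ≤ k) : StrictMono (gapEmb k i) := by
  intro a b hab
  rw [Fin.lt_def] at hab ⊢
  simp only [gapEmb]
  split_ifs <;> omega

theorem image_gapEmb (hk : 1 ≤ k) (hki : k ≤ i) : univ.image (gapEmb k i) = gapCompl n k i := by
  ext v
  simp only [mem_image, mem_univ, true_and, gapCompl, mem_filter, Fin.le_def]
  constructor
  · rintro ⟨j, rfl⟩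
    simp only [gapEmb]
    split_ifs <;> omega
  · intro hv
    have := v.isLt
    rcases hv with hv | hv
    · exact ⟨⟨v, by omega⟩, Fin.ext (by simp only [gapEmb]; split_ifs <;> omega)⟩
    · exact ⟨⟨v + 1 - k, by omega⟩, Fin.ext (by simp only [gapEmb]; split_ifs <;> omega)⟩

theorem card_gapCompl (hk : 1 ≤ k) (hki : k ≤ i) : #(gapCompl n k i) = n - k + 1 := by
  rw [← image_gapEmb hk hki, card_image_of_injective _ (strictMono_gapEmb hk).injective,
    card_univ, Fintype.card_fin]

theorem orderEmbOfFin_gapCompl (hk : 1 ≤ k) (hki : k ≤ i) (hT : #(gapCompl n k i) = n - k + 1)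
    {x : Fin (n - k + 1)} (hx : (x : ℕ) = i - k + 1) :
    (gapCompl n k i).orderEmbOfFin hT x = i := by
  rw [← orderEmbOfFin_unique hT (fun j => image_gapEmb hk hki ▸ mem_image_of_mem _ (mem_univ j))
    (strictMono_gapEmb hk)]
  exact Fin.ext (by simp only [gapEmb]; split_ifs <;> omega)

theorem add_le_iff_lt_of_mem_gapCompl (hk : 1 ≤ k) {v : Fin n} (hv : v ∈ gapCompl n k i) :
    (v : ℕ) + k ≤ i ↔ v < i := by
  simp only [gapCompl, mem_filter, mem_univ, true_and, Fin.le_def] at hv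
  rw [Fin.lt_def]
  omega

end Gap

section KPeaks

variable {n k : ℕ}

theorem isKPeak_iff_shielded {σ : Perm (Fin n)} {i : Fin n} :
    IsKPeak n k σ i ↔
      Shielded (fun s => i < σ s) (fun j => (σ j : ℕ) + k ≤ i) (σ.symm i) := by
  constructor
  · rintro ⟨hR, hL⟩ s hs
    rcases lt_trichotomy s (σ.symm i) with hsp | rfl | hps
    · obtain ⟨j, hsj, hjp, hj⟩ := hL s hsp hs
      exact ⟨j, hj, hjp.ne, Set.mem_uIcc.mpr (Or.inr ⟨hsj, hjp.le⟩)⟩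
    · simp at hs
    · obtain ⟨j, hpj, hjs, hj⟩ := hR s hps hs
      exact ⟨j, hj, hpj.ne', Set.mem_uIcc.mpr (Or.inl ⟨hpj.le, hjs⟩)⟩
  · intro h
    refine ⟨fun s hps hs => ?_, fun s hsp hs => ?_⟩
    · obtain ⟨j, hj, hjp, hjs⟩ := h s hs
      rw [Set.uIcc_of_le hps.le, Set.mem_Icc] at hjs
      exact ⟨j, lt_of_le_of_ne hjs.1 hjp.symm, hjs.2, hj⟩
    · obtain ⟨j, hj, hjp, hjs⟩ := h s hs
      rw [Set.uIcc_of_ge hsp.le, Set.mem_Icc] at hjs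
      exact ⟨j, hjs.1, lt_of_le_of_ne hjs.2 hjp, hj⟩

theorem not_isKPeak_of_lt (hkn : k < n) {i : Fin n} (hik : (i : ℕ) < k) (σ : Perm (Fin n)) :
    ¬ IsKPeak n k σ i := by
  intro h
  obtain ⟨j, hj, -⟩ := isKPeak_iff_shielded.mp h (σ.symm ⟨n - 1, by omega⟩)
    (by simp only [apply_symm_apply, Fin.lt_def]; omega)
  omega

theorem isKPeak_iff_isPeakAt_pattern {m : ℕ} {i : Fin n} (hk : 1 ≤ k)
    (hT : #(gapCompl n k i) = m) {x : Fin m} (hx : (gapCompl n k i).orderEmbOfFin hT x = i)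
    (σ : Perm (Fin n)) :
    IsKPeak n k σ i ↔ IsPeakAt (pattern hT σ) ((pattern hT σ).symm x) := by
  set T := gapCompl n k i
  set w := pattern hT σ
  set t := T.orderEmbOfFin hT
  set q := (T.map σ.symm.toEmbedding).orderEmbOfFin ((card_map _).trans hT)
  have hw (r : Fin m) : σ (q r) = t (w r) := (orderEmbOfFin_pattern hT σ r).symm
  have hqρ : q (w.symm x) = σ.symm i := by rw [eq_symm_apply, hw, apply_symm_apply, hx]
  have hrange (s : Fin n) (hs : σ s ∈ T) : s ∈ Set.range q := by
    simpa [q, range_orderEmbOfFin, mem_map_equiv] using hs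
  have hhigh : (fun s => i < σ s) ∘ q = fun r => x < w r := by
    ext r
    rw [Function.comp_apply, hw, ← hx, t.lt_iff_lt]
  have hlow : (fun j => (σ j : ℕ) + k ≤ i) ∘ q = fun r => w r < x := by
    ext r
    rw [Function.comp_apply, hw, add_le_iff_lt_of_mem_gapCompl hk (orderEmbOfFin_mem T hT _),
      ← hx, t.lt_iff_lt]
  rw [isKPeak_iff_shielded, ← hqρ,
    shielded_comp_iff q (fun s hs => hrange s (by simp [T, gapCompl, hs.le]))
      (fun j hj => hrange j (by simp [T, gapCompl, hj])), hhigh, hlow,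
    shielded_iff_forall_covBy (by simp) fun r hr => ?_, IsPeakAt, apply_symm_apply]
  exact (lt_or_gt_of_ne fun h => hr (by rw [← h, symm_apply_apply])).symm

open scoped Classical

theorem card_filter_isKPeak_mul_factorial (hk : 1 ≤ k) {i : Fin n} (hki : k ≤ i)
    {x : Fin (n - k + 1)} (hx : (x : ℕ) = i - k + 1) :
    #{σ : Perm (Fin n) | IsKPeak n k σ i} * (n - k + 1).factorial =
      n.factorial * #{u : Perm (Fin (n - k + 1)) | IsPeakAt u (u.symm x)} := by
  have hT := card_gapCompl hk hki
  have hpeak := isKPeak_iff_isPeakAt_pattern hk hT (orderEmbOfFin_gapCompl hk hki hT hx)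
  rw [filter_congr fun σ _ => hpeak σ]
  simpa using card_filter_pattern_mul_factorial hT fun u => IsPeakAt u (u.symm x)

theorem sum_card_filter_isKPeak_mul_factorial (hk : 1 ≤ k) (hkn : k < n) :
    (∑ i : Fin n, #{σ : Perm (Fin n) | IsKPeak n k σ i}) * (n - k + 1).factorial =
      n.factorial * ∑ ρ : Fin (n - k + 1), #{u : Perm (Fin (n - k + 1)) | IsPeakAt u ρ} := by
  have hk_le {i : Fin n}
      (h : #{σ : Perm (Fin n) | IsKPeak n k σ i} * (n - k + 1).factorial ≠ 0) : k ≤ i := by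
    by_contra hik
    simp [filter_false_of_mem fun σ _ => not_isKPeak_of_lt hkn (not_le.mp hik) σ] at h
  rw [sum_mul, ← sum_card_filter_isPeakAt_symm, mul_sum]
  -- `i ↦ i - k + 1`, the rank of `i` in `gapCompl n k i`, matches up the nonzero terms.
  refine sum_bij_ne_zero (fun i _ _ => ⟨i - k + 1, by omega⟩) (fun _ _ _ => mem_univ _)
    (fun a _ ha b _ hb hab => ?_) (fun x _ hx => ?_) (fun i _ hi => ?_)
  · have := hk_le ha
    have := hk_le hb
    have := congrArg Fin.val hab
    simp only at this
    exact Fin.ext (by omega)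
  · have hx0 : (x : ℕ) ≠ 0 := by
      intro h0
      obtain ⟨u, hu⟩ := card_pos.mp (Nat.pos_of_ne_zero (right_ne_zero_of_mul hx))
      simpa [h0] using (mem_filter.mp hu).2.pos (by omega)
    refine ⟨⟨x + k - 1, by omega⟩, mem_univ _, ?_, Fin.ext (by simp; omega)⟩
    rwa [card_filter_isKPeak_mul_factorial hk (i := ⟨x + k - 1, by omega⟩) (x := x)
      (by simp; omega) (by simp; omega)]
  · exact card_filter_isKPeak_mul_factorial hk (hk_le hi) rfl

end KPeaks

/-- the expected number of `k`-peaks of a uniformly random permutation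
of `[n]` equals `(n-k+2)/3`. -/
theorem expectation_numKPeaks (n k : ℕ) (hk : 1 ≤ k) (hkn : k ≤ n - 1) :
    pexp n (fun σ => (numKPeaks n k σ : ℝ)) = ((n : ℝ) - k + 2) / 3 := by
  classical
  have hkn' : k < n := by omega
  have hsum : ∑ σ : Perm (Fin n), numKPeaks n k σ =
      ∑ i : Fin n, #{σ : Perm (Fin n) | IsKPeak n k σ i} := by
    simp only [numKPeaks, Nat.card_eq_fintype_card, Fintype.card_subtype, card_filter]
    exact sum_comm
  have hcount : ((∑ σ : Perm (Fin n), numKPeaks n k σ : ℕ) : ℝ) * (n - k + 1 : ℕ).factorial =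
      n.factorial * ∑ ρ : Fin (n - k + 1), (#{u : Perm (Fin (n - k + 1)) | IsPeakAt u ρ} : ℝ) := by
    rw [hsum]
    exact_mod_cast sum_card_filter_isKPeak_mul_factorial hk hkn'
  have hpeaks := three_mul_sum_card_filter_isPeakAt (m := n - k + 1) (by omega)
  have hm : ((n - k + 1 : ℕ) : ℝ) = n - k + 1 := by push_cast [Nat.cast_sub hkn'.le]; ring
  rw [hm] at hpeaks
  have hfac : ((n - k + 1 : ℕ).factorial : ℝ) ≠ 0 := by positivity
  rw [pexp, ← Nat.cast_sum, Fintype.card_perm, Fintype.card_fin,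
    div_eq_div_iff (by positivity) three_ne_zero]
  refine mul_right_cancel₀ hfac ?_
  linear_combination 3 * hcount + (n.factorial : ℝ) * hpeaks

end PaperKAlt
end

section
/- For every integer n ≥ 1, every integer k with 1 ≤ k ≤ n − 1, and every permutation σ of [n], the length of the longest k-alternating subsequence of σ and the number of k-peaks of σ satisfy |as_{n,k}(σ) − 2·P(σ)| ≤ 1. -/
open Filter

namespace PaperKAlt

/-!
Cutting an alternating subsequence `x₀ > x₁ < x₂ > x₃ < ⋯` after each valley splits the
positions into blocks, each containing one descent `x₂ᵢ > x₂ᵢ₊₁`; the position of the largest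
value of `σ` in such a block is a `k`-peak, since the valley to its left and the bottom of the
descent to its right shield it from larger values. Conversely, two consecutive `k`-peaks are
separated by a value at least `k` below both of them, so the peaks, read left to right and
interleaved with these valleys, form a `k`-alternating subsequence.
-/

open Finset

variable {n k : ℕ} {σ : Equiv.Perm (Fin n)}

theorem AltChain.isChain_lt :
    ∀ {b : Bool} {l : List (Fin n)}, AltChain n k σ b l → l.IsChain (· < ·)
  | _, [], _ => List.isChain_nil
  | _, [_], _ => List.isChain_singleton _
  | _, _ :: _ :: _, h => List.IsChain.cons_cons h.1 h.2.2.isChain_lt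

theorem AltChain.tail :
    ∀ {b : Bool} {x : Fin n} {l : List (Fin n)}, AltChain n k σ b (x :: l) → AltChain n k σ (!b) l
  | _, _, [], _ => trivial
  | _, _, _ :: _, h => h.2.2

theorem AltChain.length_le_asLen {l : List (Fin n)} (h : AltChain n k σ true l) :
    l.length ≤ asLen n k σ := by
  refine le_csSup ⟨n, ?_⟩ ⟨l, h, rfl⟩
  rintro _ ⟨l, hl, rfl⟩
  have hnd : l.Nodup := (List.isChain_iff_pairwise.1 hl.isChain_lt).imp ne_of_lt
  simpa using hnd.length_le_card

theorem asLen_le {m : ℕ} (h : ∀ l, AltChain n k σ true l → l.length ≤ m) : asLen n k σ ≤ m :=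
  csSup_le ⟨0, [], trivial, rfl⟩ (by rintro _ ⟨l, hl, rfl⟩; exact h l hl)

open scoped Classical in
theorem numKPeaks_eq_card_filter :
    numKPeaks n k σ = #(univ.filter fun q => IsKPeak n k σ (σ q)) := by
  rw [numKPeaks, ← Nat.card_congr (σ.subtypeEquiv fun _ => Iff.rfl), Nat.card_eq_fintype_card,
    Fintype.card_subtype]

theorem card_le_numKPeaks {s : Finset (Fin n)} (hs : ∀ q ∈ s, IsKPeak n k σ (σ q)) :
    #s ≤ numKPeaks n k σ := by
  classical
  rw [numKPeaks_eq_card_filter]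
  exact card_le_card fun q hq => mem_filter.2 ⟨mem_univ q, hs q hq⟩

theorem exists_sorted_kPeak_positions (σ : Equiv.Perm (Fin n)) :
    ∃ L : List (Fin n), L.IsChain (· < ·) ∧ (∀ q ∈ L, IsKPeak n k σ (σ q)) ∧
      L.length = numKPeaks n k σ := by
  classical
  refine ⟨(univ.filter fun q => IsKPeak n k σ (σ q)).sort (· ≤ ·),
    List.isChain_iff_pairwise.2 (sortedLT_sort _).pairwise, fun q hq => ?_, ?_⟩
  · simpa using hq
  · rw [length_sort, numKPeaks_eq_card_filter]

theorem exists_isKPeak_of_descent (hk : 1 ≤ k) {a b : Fin n} {c : ℕ} (hca : c ≤ a) (hab : a < b)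
    (hdesc : (σ b : ℕ) + k ≤ σ a)
    (hleft : ∀ s : Fin n, (s : ℕ) < c → ∃ j : Fin n, s ≤ j ∧ (j : ℕ) < c ∧ (σ j : ℕ) + k ≤ σ a) :
    ∃ q : Fin n, c ≤ q ∧ q < b ∧ IsKPeak n k σ (σ q) := by
  obtain ⟨q, hq, hmax⟩ := exists_max_image (univ.filter fun s : Fin n => c ≤ s ∧ s ≤ b)
    (fun s => (σ s : ℕ)) ⟨a, by simp [hca, hab.le]⟩
  simp only [mem_filter, mem_univ, true_and] at hq hmax
  have hqa : (σ a : ℕ) ≤ σ q := hmax a ⟨hca, hab.le⟩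
  have hqb : q < b := lt_of_le_of_ne hq.2 (by rintro rfl; omega)
  refine ⟨q, hq.1, hqb, ?_, ?_⟩ <;> simp only [Equiv.symm_apply_apply] <;> intro s hs hlt <;>
    rw [Fin.lt_def] at hlt
  · by_cases hsb : s ≤ b
    · have := hmax s ⟨by omega, hsb⟩
      omega
    · exact ⟨b, hqb, (lt_of_not_ge hsb).le, by omega⟩
  · by_cases hcs : c ≤ s
    · have := hmax s ⟨hcs, hs.le.trans hq.2⟩
      omega
    · obtain ⟨j, hsj, hjc, hj⟩ := hleft s (by omega)
      exact ⟨j, hsj, by omega, by omega⟩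

theorem AltChain.exists_kPeaks (hk : 1 ≤ k) :
    ∀ {c : ℕ} {l : List (Fin n)}, AltChain n k σ true l →
      (∀ x ∈ l.head?, c ≤ x ∧
        ∀ s : Fin n, (s : ℕ) < c → ∃ j : Fin n, s ≤ j ∧ (j : ℕ) < c ∧ (σ j : ℕ) + k ≤ σ x) →
      ∃ s : Finset (Fin n), l.length ≤ 2 * #s + 1 ∧ ∀ q ∈ s, c ≤ q ∧ IsKPeak n k σ (σ q)
  | _, [], _, _ | _, [_], _, _ => ⟨∅, by simp, by simp⟩
  | c, x :: y :: l, h, hx => by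
    obtain ⟨hxy, hdesc, htail⟩ := h
    obtain ⟨hcx, hleft⟩ := hx x rfl
    obtain ⟨q, hcq, hqy, hq⟩ := exists_isKPeak_of_descent hk hcx hxy (by simpa using hdesc) hleft
    have hguard : ∀ z ∈ l.head?, (y : ℕ) + 1 ≤ z ∧ ∀ s : Fin n, (s : ℕ) < y + 1 →
        ∃ j : Fin n, s ≤ j ∧ (j : ℕ) < y + 1 ∧ (σ j : ℕ) + k ≤ σ z := by
      cases l with
      | nil => simp
      | cons z l =>
        obtain ⟨hyz, hasc, -⟩ := htail
        rintro _ ⟨⟩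
        exact ⟨Fin.lt_def.1 hyz, fun s hs => ⟨y, by omega, by omega, by simpa using hasc⟩⟩
    obtain ⟨s, hlen, hs⟩ := htail.tail.exists_kPeaks hk hguard
    have hqs : q ∉ s := fun h => by have := (hs q h).1; omega
    refine ⟨insert q s, by simp only [card_insert_of_notMem hqs, List.length_cons]; omega, ?_⟩
    simp only [mem_insert, forall_eq_or_imp]
    exact ⟨⟨hcq, hq⟩, fun q' hq' => ⟨by have := (hs q' hq').1; omega, (hs q' hq').2⟩⟩

theorem exists_valley_between_kPeaks {q q' : Fin n} (hqq' : q < q')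
    (hq : IsKPeak n k σ (σ q)) (hq' : IsKPeak n k σ (σ q')) :
    ∃ v : Fin n, q < v ∧ v < q' ∧ (σ v : ℕ) + k ≤ σ q ∧ (σ v : ℕ) + k ≤ σ q' := by
  rcases lt_or_gt_of_ne (σ.injective.ne hqq'.ne) with hlt | hgt
  · obtain ⟨v, hqv, hvq', hv⟩ := hq.1 q' (by simpa using hqq') hlt
    rw [Equiv.symm_apply_apply] at hqv
    rw [Fin.lt_def] at hlt
    exact ⟨v, hqv, lt_of_le_of_ne hvq' (by rintro rfl; omega), hv, by omega⟩
  · obtain ⟨v, hqv, hvq', hv⟩ := hq'.2 q (by simpa using hqq') hgt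
    rw [Equiv.symm_apply_apply] at hvq'
    rw [Fin.lt_def] at hgt
    exact ⟨v, lt_of_le_of_ne hqv (by rintro rfl; omega), hvq', by omega, hv⟩

theorem exists_altChain_of_kPeaks :
    ∀ {q : Fin n} {L : List (Fin n)}, (q :: L).IsChain (· < ·) →
      (∀ x ∈ q :: L, IsKPeak n k σ (σ x)) →
      ∃ l : List (Fin n), AltChain n k σ true (q :: l) ∧ 2 * (q :: L).length = (q :: l).length + 1
  | _, [], _, _ => ⟨[], trivial, rfl⟩
  | q, q' :: L, hL, hpk => by
    rw [List.isChain_cons_cons] at hL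
    obtain ⟨l, hl, hlen⟩ := exists_altChain_of_kPeaks hL.2 fun x hx => hpk x (.tail _ hx)
    obtain ⟨v, hqv, hvq', hv, hv'⟩ :=
      exists_valley_between_kPeaks hL.1 (hpk q (by simp)) (hpk q' (by simp))
    exact ⟨v :: q' :: l, ⟨hqv, by simpa using hv, hvq', by simpa using hv', hl⟩,
      by simp only [List.length_cons] at hlen ⊢; omega⟩

theorem asLen_le_two_mul_numKPeaks_add_one (hk : 1 ≤ k) :
    asLen n k σ ≤ 2 * numKPeaks n k σ + 1 :=
  asLen_le fun l hl => by
    obtain ⟨s, hlen, hs⟩ := hl.exists_kPeaks hk (c := 0) (by simp)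
    have := card_le_numKPeaks fun q hq => (hs q hq).2
    omega

theorem two_mul_numKPeaks_le_asLen_add_one (σ : Equiv.Perm (Fin n)) :
    2 * numKPeaks n k σ ≤ asLen n k σ + 1 := by
  obtain ⟨L, hL, hpk, hlen⟩ := exists_sorted_kPeak_positions (k := k) σ
  rw [← hlen]
  cases L with
  | nil => simp
  | cons q L =>
    obtain ⟨l, hl, hlen'⟩ := exists_altChain_of_kPeaks hL hpk
    have := hl.length_le_asLen
    omega

theorem asLen_sub_two_numKPeaks_general (n k : ℕ) (hk : 1 ≤ k)
    (σ : Equiv.Perm (Fin n)) :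
    |(asLen n k σ : ℤ) - 2 * (numKPeaks n k σ : ℤ)| ≤ 1 := by
  have := asLen_le_two_mul_numKPeaks_add_one (σ := σ) hk
  have := two_mul_numKPeaks_le_asLen_add_one (k := k) σ
  rw [abs_le]
  omega

/-- the length of the longest `k`-alternating subsequence differs from
twice the number of `k`-peaks by at most `1`. -/
theorem asLen_sub_two_numKPeaks (n k : ℕ) (hn : 1 ≤ n) (hk : 1 ≤ k) (hkn : k ≤ n - 1)
    (σ : Equiv.Perm (Fin n)) :
    |(asLen n k σ : ℤ) - 2 * (numKPeaks n k σ : ℤ)| ≤ 1 :=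
  asLen_sub_two_numKPeaks_general n k hk σ

end PaperKAlt
end

section
/- Let n ≥ 1, let k be an integer with 1 ≤ k ≤ n − 1, and let m ≥ 1 be a window size. For every permutation σ of [n] and every value i ∈ [n], if i is a local k-peak of σ with window m, then i is a k-peak of σ. -/
open Filter

namespace PaperKAlt

theorem localKPeak_isKPeak_general (n k m : ℕ) (σ : Equiv.Perm (Fin n)) (i : Fin n) :
    IsLocalKPeak n k m σ i → IsKPeak n k σ i := by
  -- A position `s` with `i < σ s` cannot lie in the stretch where `i` is the maximum,
  -- so it lies beyond the local witness `j`, which then witnesses the global condition.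
  rintro ⟨hR, hL⟩
  refine ⟨fun s hs his => ?_, fun s hs his => ?_⟩
  · rcases hR with ⟨j, hij, -, hjk, hwin⟩ | ⟨-, htail⟩
    · have hjs : j < s := lt_of_not_ge fun hsj => (hwin s hs.le hsj).1.not_gt his
      exact ⟨j, hij, hjs.le, hjk⟩
    · exact absurd (htail s hs.le) his.not_ge
  · rcases hL with ⟨j, hji, -, hjk, hwin⟩ | ⟨-, hhead⟩
    · have hsj : s < j := lt_of_not_ge fun hjs => (hwin s hjs hs.le).1.not_gt his
      exact ⟨j, hsj.le, hji, hjk⟩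
    · exact absurd (hhead s hs.le) his.not_ge

/-- every local `k`-peak (with any window `m ≥ 1`) is a `k`-peak. -/
theorem localKPeak_isKPeak (n k m : ℕ) (hn : 1 ≤ n) (hk : 1 ≤ k) (hkn : k ≤ n - 1)
    (hm : 1 ≤ m) (σ : Equiv.Perm (Fin n)) (i : Fin n) :
    IsLocalKPeak n k m σ i → IsKPeak n k σ i :=
  localKPeak_isKPeak_general n k m σ i

end PaperKAlt
end

section
/- Let n, k, m be integers with 1 ≤ k ≤ n − 1, m ≥ 1 and n ≥ 2m + 2. Let P be the number of k-peaks and Y the number of local k-peaks with window m of a uniformly random permutation of [n]. Then the total variation distance between the laws of P and Y satisfies d_TV(P, Y) ≤ 3n·(k/n)^m. -/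
/-!
Every local `k`-peak is a `k`-peak, so `P ≠ Y` forces a `k`-peak `i = σ p` that fails the local
condition on one side. Walking away from `p` on that side, the `m` values after `σ p` all lie in
`(i - k, i)`: the first value leaving this interval would either exceed `i`, contradicting the
peak condition, or fall to `i - k` or below, which is the missing local witness. So one of the at
most `2n` windows of `m + 1` consecutive positions carries this shallow pattern. Permutations act
transitively on injections of a window, so the values on a window form a uniform injection and
the pattern has probability at most `(k - 1)_m / (n - 1)_m ≤ (k / n)^m`. The coupling inequality
`d_TV(P, Y) ≤ ℙ(P ≠ Y)` and a union bound over windows give `2n (k / n)^m`.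
-/

open Filter

namespace PaperKAlt

open Finset Function Equiv

section Drops

variable {α : Type*} [LinearOrder α] [WellFoundedLT α] {x : α → ℕ} {k i : ℕ} {p : α}
  {W : Set α}

theorem lt_and_lt_add_of_not_exists_drop (hx : Injective x) (hxp : x p = i)
    (hW : ∀ s t, p < s → s ≤ t → t ∈ W → s ∈ W)
    (hpeak : ∀ s, p < s → i < x s → ∃ j, p < j ∧ j ≤ s ∧ x j + k ≤ i)
    (hdrop : ¬ ∃ j, p < j ∧ j ∈ W ∧ x j + k ≤ i ∧
      ∀ s, p ≤ s → s ≤ j → x s ≤ i ∧ x j ≤ x s) :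
    ∀ s, p < s → s ∈ W → x s < i ∧ i < x s + k := by
  intro s
  induction s using WellFoundedLT.induction with
  | _ s ih =>
  intro hps hsW
  have hbetween : ∀ u, p < u → u < s → x u < i ∧ i < x u + k := fun u hpu hus =>
    ih u hus hpu (hW u s hpu hus.le hsW)
  rcases lt_trichotomy (x s) i with hlt | heq | hgt
  · refine ⟨hlt, lt_of_not_ge fun hle => hdrop ⟨s, hps, hsW, hle, fun u hpu hus => ?_⟩⟩
    rcases hpu.eq_or_lt with rfl | hpu
    · omega
    rcases hus.eq_or_lt with rfl | hus
    · exact ⟨hlt.le, le_rfl⟩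
    have := hbetween u hpu hus
    omega
  · exact absurd (hx (heq.trans hxp.symm)) hps.ne'
  · obtain ⟨j, hpj, hjs, hj⟩ := hpeak s hps hgt
    rcases hjs.eq_or_lt with rfl | hjs
    · omega
    · have := hbetween j hpj hjs
      omega

end Drops

theorem card_filter_smul_mem_mul_card {G X : Type*} [Group G] [MulAction G X] [Fintype G]
    [Fintype X] [DecidableEq X] [MulAction.IsPretransitive G X] (x : X) (B : Finset X) :
    #{g : G | g • x ∈ B} * Fintype.card X = #B * Fintype.card G := by
  have hfiber : ∀ y, #{g : G | g • x = y} = #{g : G | g • x = x} := by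
    intro y
    obtain ⟨h, rfl⟩ := MulAction.exists_smul_eq G x y
    refine card_nbij' (h⁻¹ * ·) (h * ·) ?_ ?_ ?_ ?_ <;> intro g hg <;> simp_all [mul_smul]
  have hcount : ∀ s : Finset X, #{g : G | g • x ∈ s} = #s * #{g : G | g • x = x} := by
    intro s
    rw [card_eq_sum_card_fiberwise (s := {g : G | g • x ∈ s}) (t := s) (f := (· • x))
      fun g hg => (mem_filter.1 hg).2,
      ← smul_eq_mul, ← sum_const]
    refine sum_congr rfl fun y hy => ?_
    rw [filter_filter, ← hfiber y]
    congr 1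
    ext g
    simp only [mem_filter, mem_univ, true_and, and_iff_right_iff_imp]
    rintro rfl
    exact hy
  have hG : Fintype.card G = Fintype.card X * #{g : G | g • x = x} := by
    simpa using hcount univ
  rw [hcount, hG]
  ring

theorem descFactorial_pred_mul_pow_le {k n : ℕ} (hkn : k ≤ n) (m : ℕ) :
    (k - 1).descFactorial m * n ^ m ≤ k ^ m * (n - 1).descFactorial m := by
  induction m with
  | zero => simp
  | succ m ih =>
    have hstep : (k - 1 - m) * n ≤ k * (n - 1 - m) := by
      rw [Nat.sub_sub, Nat.sub_sub, Nat.sub_mul, Nat.mul_sub]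
      exact Nat.sub_le_sub_left (by rw [mul_comm]; exact Nat.mul_le_mul_left _ hkn) _
    calc (k - 1).descFactorial (m + 1) * n ^ (m + 1)
        = ((k - 1 - m) * n) * ((k - 1).descFactorial m * n ^ m) := by
          rw [Nat.descFactorial_succ, pow_succ]; ring
      _ ≤ (k * (n - 1 - m)) * (k ^ m * (n - 1).descFactorial m) := Nat.mul_le_mul hstep ih
      _ = k ^ (m + 1) * (n - 1).descFactorial (m + 1) := by
          rw [Nat.descFactorial_succ, pow_succ]; ring

section Windows

variable {n m : ℕ}

def IsWindow (a : Fin (m + 1) ↪ Fin n) : Prop :=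
  (∀ t, (a t : ℕ) = a 0 + t) ∨ ∀ t, (a t : ℕ) + t = a 0

def IsShallow (k : ℕ) (v : Fin (m + 1) ↪ Fin n) : Prop :=
  ∀ t : Fin m, v t.succ < v 0 ∧ (v 0 : ℕ) < v t.succ + k

instance : DecidablePred (IsWindow (n := n) (m := m)) := fun a => by
  unfold IsWindow; infer_instance

instance (k : ℕ) : DecidablePred (IsShallow (n := n) (m := m) k) := fun v => by
  unfold IsShallow; infer_instance

theorem card_isWindow_le : #{a : Fin (m + 1) ↪ Fin n | IsWindow a} ≤ 2 * n := by
  let code : (Fin (m + 1) ↪ Fin n) → Fin n × Bool := fun a =>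
    (a 0, decide (∀ t, (a t : ℕ) = a 0 + t))
  calc #{a : Fin (m + 1) ↪ Fin n | IsWindow a} ≤ #(univ : Finset (Fin n × Bool)) :=
        card_le_card_of_injOn code (fun _ _ => mem_univ _) ?_
    _ = 2 * n := by simp [mul_comm]
  intro a ha b hb hab
  simp only [coe_filter, mem_univ, true_and, code, Prod.mk.injEq,
    decide_eq_decide] at ha hb hab
  obtain ⟨h0, hdir⟩ := hab
  ext t
  by_cases hright : ∀ t, (a t : ℕ) = a 0 + t
  · have := hright t
    have := hdir.1 hright t
    omega
  · have := ha.resolve_left hright t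
    have := hb.resolve_left (mt hdir.2 hright) t
    omega

theorem card_isShallow_fiber_le (k : ℕ) (i : Fin n) :
    #{v : Fin (m + 1) ↪ Fin n | IsShallow k v ∧ v 0 = i} ≤ (k - 1).descFactorial m := by
  let S := {u : Fin n // u < i ∧ (i : ℕ) < u + k}
  have hS : Fintype.card S ≤ k - 1 := by
    rw [Fintype.card_subtype]
    calc #{u : Fin n | u < i ∧ (i : ℕ) < u + k} ≤ #(Ioo (i : ℕ) (i + k)) :=
          card_le_card_of_injOn (fun u => (u : ℕ) + k) (fun u hu => by simp at hu ⊢; omega)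
            fun u _ w _ h => Fin.ext (by simpa using h)
      _ = k - 1 := by simp
  let tail : {v : Fin (m + 1) ↪ Fin n // IsShallow k v ∧ v 0 = i} → (Fin m ↪ S) := fun v =>
    ⟨fun t => ⟨v.1 t.succ, by obtain ⟨v, hv, rfl⟩ := v; exact hv t⟩, fun t u h => by
      simpa using v.1.injective (congrArg Subtype.val h)⟩
  have htail : Injective tail := by
    intro v w h
    apply Subtype.ext
    ext t
    induction t using Fin.cases with
    | zero => rw [v.2.2, w.2.2]
    | succ t => exact congrArg (fun f => ((f t : S) : ℕ)) h
  calc #{v : Fin (m + 1) ↪ Fin n | IsShallow k v ∧ v 0 = i}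
      = Fintype.card {v : Fin (m + 1) ↪ Fin n // IsShallow k v ∧ v 0 = i} :=
        (Fintype.card_subtype _).symm
    _ ≤ Fintype.card (Fin m ↪ S) := Fintype.card_le_of_injective tail htail
    _ = (Fintype.card S).descFactorial m := by simp [Fintype.card_embedding_eq]
    _ ≤ (k - 1).descFactorial m := Nat.descFactorial_le _ hS

theorem card_isShallow_le (k : ℕ) :
    #{v : Fin (m + 1) ↪ Fin n | IsShallow k v} ≤ n * (k - 1).descFactorial m := by
  rw [card_eq_sum_card_fiberwise (f := fun v => v 0) (t := univ) fun _ _ => mem_univ _]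
  calc ∑ i, #{v ∈ {v : Fin (m + 1) ↪ Fin n | IsShallow k v} | v 0 = i}
      ≤ ∑ _i : Fin n, (k - 1).descFactorial m := by
        refine sum_le_sum fun i _ => ?_
        rw [filter_filter]
        exact card_isShallow_fiber_le k i
    _ = n * (k - 1).descFactorial m := by simp

end Windows

section Probability

variable {n : ℕ}

theorem pprob_eq_card_div (A : Perm (Fin n) → Prop) [DecidablePred A] :
    pprob n A = #{σ | A σ} / n.factorial := by
  rw [pprob, Nat.card_eq_fintype_card, Fintype.card_subtype, Fintype.card_perm, Fintype.card_fin]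

theorem pprob_nonneg (A : Perm (Fin n) → Prop) : 0 ≤ pprob n A := by
  unfold pprob
  positivity

theorem pprob_eq_zero {A : Perm (Fin n) → Prop} (h : ∀ σ, ¬ A σ) : pprob n A = 0 := by
  simp [pprob, h]

theorem pprob_le_sum {ι : Type*} (s : Finset ι) {A : Perm (Fin n) → Prop}
    {B : ι → Perm (Fin n) → Prop} (h : ∀ σ, A σ → ∃ a ∈ s, B a σ) :
    pprob n A ≤ ∑ a ∈ s, pprob n (B a) := by
  classical
  simp only [pprob_eq_card_div, ← sum_div]
  gcongr
  calc (#{σ | A σ} : ℝ) ≤ #(s.biUnion fun a => {σ | B a σ}) := by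
        exact_mod_cast card_le_card fun σ hσ => by simpa using h σ (by simpa using hσ)
    _ ≤ ∑ a ∈ s, (#{σ | B a σ} : ℝ) := by exact_mod_cast card_biUnion_le

theorem pprob_le_add {A B C : Perm (Fin n) → Prop} (h : ∀ σ, A σ → B σ ∨ C σ) :
    pprob n A ≤ pprob n B + pprob n C := by
  simpa using pprob_le_sum (univ : Finset Bool) (B := fun b => cond b B C) fun σ hσ => by
    rcases h σ hσ with hB | hC
    exacts [⟨true, mem_univ _, hB⟩, ⟨false, mem_univ _, hC⟩]

theorem sum_pprob_and_eq (A : Perm (Fin n) → Prop) {f : Perm (Fin n) → ℕ} {T : Finset ℕ}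
    (hT : ∀ σ, f σ ∈ T) : ∑ j ∈ T, pprob n (fun σ => A σ ∧ f σ = j) = pprob n A := by
  classical
  simp only [pprob_eq_card_div, ← sum_div]
  rw [card_eq_sum_card_fiberwise (f := f) (t := T) fun σ _ => hT σ]
  simp [filter_filter]

theorem tv_le_pprob_ne (f g : Perm (Fin n) → ℕ) :
    (1 / 2 : ℝ) * ∑' j : ℕ, |pprob n (fun σ => f σ = j) - pprob n (fun σ => g σ = j)|
      ≤ pprob n (fun σ => f σ ≠ g σ) := by
  classical
  set T := univ.image f ∪ univ.image g
  have hfT : ∀ σ, f σ ∈ T := fun σ => mem_union_left _ (mem_image_of_mem f (mem_univ σ))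
  have hgT : ∀ σ, g σ ∈ T := fun σ => mem_union_right _ (mem_image_of_mem g (mem_univ σ))
  have hj : ∀ j, |pprob n (fun σ => f σ = j) - pprob n (fun σ => g σ = j)| ≤
      pprob n (fun σ => f σ ≠ g σ ∧ f σ = j) + pprob n (fun σ => f σ ≠ g σ ∧ g σ = j) := by
    intro j
    have hf := pprob_le_add (A := fun σ => f σ = j) (B := fun σ => g σ = j)
      (C := fun σ => f σ ≠ g σ ∧ f σ = j) fun σ h => by omega
    have hg := pprob_le_add (A := fun σ => g σ = j) (B := fun σ => f σ = j)
      (C := fun σ => f σ ≠ g σ ∧ g σ = j) fun σ h => by omega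
    rw [abs_sub_le_iff]
    constructor <;> linarith [pprob_nonneg (n := n) fun σ => f σ ≠ g σ ∧ f σ = j,
      pprob_nonneg (n := n) fun σ => f σ ≠ g σ ∧ g σ = j]
  rw [tsum_eq_sum (s := T) fun j hj => by
    rw [pprob_eq_zero (A := fun σ => f σ = j) fun σ h => hj (h ▸ hfT σ),
      pprob_eq_zero (A := fun σ => g σ = j) fun σ h => hj (h ▸ hgT σ), sub_zero, abs_zero]]
  calc (1 / 2 : ℝ) * ∑ j ∈ T, |pprob n (fun σ => f σ = j) - pprob n (fun σ => g σ = j)|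
      ≤ (1 / 2 : ℝ) * ∑ j ∈ T, (pprob n (fun σ => f σ ≠ g σ ∧ f σ = j) +
          pprob n (fun σ => f σ ≠ g σ ∧ g σ = j)) := by
        gcongr with j
        exact hj j
    _ = pprob n (fun σ => f σ ≠ g σ) := by
        rw [sum_add_distrib, sum_pprob_and_eq _ hfT, sum_pprob_and_eq _ hgT]
        ring

end Probability

section Peaks

variable {n k m : ℕ}

theorem card_filter_isShallow_smul_mul_pow_le (hkn : k ≤ n) (a : Fin (m + 1) ↪ Fin n) :
    #{σ : Perm (Fin n) | IsShallow k (σ • a)} * n ^ m ≤ k ^ m * n.factorial := by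
  have := Equiv.Perm.isMultiplyPretransitive (Fin n) (m + 1)
  have hact := card_filter_smul_mem_mul_card (G := Perm (Fin n)) a
    {v : Fin (m + 1) ↪ Fin n | IsShallow k v}
  have hX : 0 < Fintype.card (Fin (m + 1) ↪ Fin n) := Fintype.card_pos_iff.2 ⟨a⟩
  obtain ⟨n, rfl⟩ : ∃ n', n = n' + 1 := ⟨n - 1, by have := (a 0).pos; omega⟩
  simp only [mem_filter, mem_univ, true_and, Fintype.card_embedding_eq, Fintype.card_fin,
    Fintype.card_perm, Nat.succ_descFactorial_succ] at hact hX
  have hratio := descFactorial_pred_mul_pow_le hkn m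
  rw [Nat.add_sub_cancel] at hratio
  refine Nat.le_of_mul_le_mul_left ?_ hX
  set N := #{σ : Perm (Fin (n + 1)) | IsShallow k (σ • a)}
  calc (n + 1) * n.descFactorial m * (N * (n + 1) ^ m)
      = N * ((n + 1) * n.descFactorial m) * (n + 1) ^ m := by ring
    _ = #{v : Fin (m + 1) ↪ Fin (n + 1) | IsShallow k v} * (n + 1) ^ m * (n + 1).factorial := by
        rw [hact]; ring
    _ ≤ (n + 1) * (k - 1).descFactorial m * (n + 1) ^ m * (n + 1).factorial := by
        gcongr ?_ * _ * _
        exact card_isShallow_le k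
    _ = (n + 1) * ((k - 1).descFactorial m * (n + 1) ^ m) * (n + 1).factorial := by ring
    _ ≤ (n + 1) * (k ^ m * n.descFactorial m) * (n + 1).factorial := by gcongr
    _ = (n + 1) * n.descFactorial m * (k ^ m * (n + 1).factorial) := by ring

theorem pprob_isShallow_smul_le (hkn : k ≤ n) (a : Fin (m + 1) ↪ Fin n) :
    pprob n (fun σ => IsShallow k (σ • a)) ≤ ((k : ℝ) / n) ^ m := by
  have hn : 0 < n := (a 0).pos
  rw [pprob_eq_card_div, div_pow, div_le_div_iff₀ (by positivity) (by positivity)]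
  exact_mod_cast card_filter_isShallow_smul_mul_pow_le hkn a

theorem IsLocalKPeak.isKPeak {σ : Perm (Fin n)} {i : Fin n} (h : IsLocalKPeak n k m σ i) :
    IsKPeak n k σ i := by
  obtain ⟨hR, hL⟩ := h
  constructor
  · intro s hs his
    rcases hR with ⟨j, hj, -, hjk, hmax⟩ | ⟨-, hmax⟩
    · by_cases hsj : s ≤ j
      · exact absurd (hmax s hs.le hsj).1 his.not_ge
      · exact ⟨j, hj, le_of_not_ge hsj, hjk⟩
    · exact absurd (hmax s hs.le) his.not_ge
  · intro s hs his
    rcases hL with ⟨j, hj, -, hjk, hmax⟩ | ⟨-, hmax⟩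
    · by_cases hjs : j ≤ s
      · exact absurd (hmax s hjs hs.le).1 his.not_ge
      · exact ⟨j, le_of_not_ge hjs, hj, hjk⟩
    · exact absurd (hmax s hs.le) his.not_ge

theorem exists_isKPeak_not_isLocalKPeak {σ : Perm (Fin n)}
    (h : numKPeaks n k σ ≠ numLocalKPeaks n k m σ) :
    ∃ i, IsKPeak n k σ i ∧ ¬ IsLocalKPeak n k m σ i := by
  by_contra! hall
  exact h (Nat.card_congr (Equiv.subtypeEquivRight fun i => ⟨hall i, IsLocalKPeak.isKPeak⟩))

def rightWindow (p : Fin n) (h : (p : ℕ) + m < n) : Fin (m + 1) ↪ Fin n :=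
  ⟨fun t => ⟨p + t, by omega⟩, fun t u htu => Fin.ext (by simpa using htu)⟩

@[simp]
theorem rightWindow_val (p : Fin n) (h : (p : ℕ) + m < n) (t : Fin (m + 1)) :
    (rightWindow p h t : ℕ) = p + t := rfl

def leftWindow (p : Fin n) (h : m ≤ p) : Fin (m + 1) ↪ Fin n :=
  ⟨fun t => ⟨p - t, by omega⟩, fun t u htu => Fin.ext (by
    have := congrArg Fin.val htu; simp at this; omega)⟩

@[simp]
theorem leftWindow_val (p : Fin n) (h : m ≤ p) (t : Fin (m + 1)) :
    (leftWindow p h t : ℕ) = p - t := rfl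

section

variable {σ : Perm (Fin n)} {i : Fin n}

theorem exists_isWindow_isShallow_of_right
    (hpeak : ∀ s, σ.symm i < s → i < σ s → ∃ j, σ.symm i < j ∧ j ≤ s ∧ (σ j : ℕ) + k ≤ i)
    (hR : ¬ ((∃ j : Fin n, σ.symm i < j ∧ (j : ℕ) ≤ (σ.symm i : ℕ) + m ∧ (σ j : ℕ) + k ≤ i ∧
        ∀ s, σ.symm i ≤ s → s ≤ j → σ s ≤ i ∧ σ j ≤ σ s) ∨
      (n ≤ (σ.symm i : ℕ) + m + 1 ∧ ∀ s, σ.symm i ≤ s → σ s ≤ i))) :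
    ∃ a : Fin (m + 1) ↪ Fin n, IsWindow a ∧ IsShallow k (σ • a) := by
  set p := σ.symm i
  have hσp : σ p = i := σ.apply_symm_apply i
  have hnear := lt_and_lt_add_of_not_exists_drop (W := {s : Fin n | (s : ℕ) ≤ p + m})
    (Fin.val_injective.comp σ.injective) (congrArg Fin.val hσp)
    (fun s t _ hst ht => show (s : ℕ) ≤ p + m from le_trans hst ht) hpeak
    fun h => hR (Or.inl h)
  have hend : (p : ℕ) + m < n := by
    by_contra! hend
    refine hR (Or.inr ⟨by omega, fun s hps => ?_⟩)
    rcases hps.eq_or_lt with rfl | hps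
    · exact hσp.le
    · exact (hnear s hps (by simp; omega)).1.le
  have h0 : rightWindow p hend 0 = p := Fin.ext (by simp)
  refine ⟨rightWindow p hend, Or.inl fun t => by simp, fun t => ?_⟩
  simp only [Function.Embedding.smul_apply, Perm.smul_def, h0, hσp]
  exact hnear _ (by simp [Fin.lt_def]) (by simp)

open OrderDual in
theorem exists_isWindow_isShallow_of_left
    (hpeak : ∀ s, s < σ.symm i → i < σ s → ∃ j, s ≤ j ∧ j < σ.symm i ∧ (σ j : ℕ) + k ≤ i)
    (hL : ¬ ((∃ j : Fin n, j < σ.symm i ∧ (σ.symm i : ℕ) ≤ (j : ℕ) + m ∧ (σ j : ℕ) + k ≤ i ∧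
        ∀ s, j ≤ s → s ≤ σ.symm i → σ s ≤ i ∧ σ j ≤ σ s) ∨
      ((σ.symm i : ℕ) ≤ m ∧ ∀ s, s ≤ σ.symm i → σ s ≤ i))) :
    ∃ a : Fin (m + 1) ↪ Fin n, IsWindow a ∧ IsShallow k (σ • a) := by
  set p := σ.symm i
  have hσp : σ p = i := σ.apply_symm_apply i
  have hnear := lt_and_lt_add_of_not_exists_drop (x := fun s => (σ (ofDual s) : ℕ))
    (p := toDual p) (W := {s | (p : ℕ) ≤ ((ofDual s : Fin n) : ℕ) + m})
    ((Fin.val_injective.comp σ.injective).comp ofDual.injective) (congrArg Fin.val hσp)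
    (fun s t _ hst ht => show (p : ℕ) ≤ ((ofDual s : Fin n) : ℕ) + m from
      le_trans ht (Nat.add_le_add_right hst m))
    (fun s hs hi => by
      obtain ⟨j, hsj, hjp, hj⟩ := hpeak (ofDual s) hs hi
      exact ⟨toDual j, hjp, hsj, hj⟩)
    fun ⟨j, hjp, hjW, hj, hall⟩ =>
      hL (Or.inl ⟨ofDual j, hjp, hjW, hj, fun s h1 h2 => hall (toDual s) h2 h1⟩)
  have hend : m ≤ (p : ℕ) := by
    by_contra! hend
    refine hL (Or.inr ⟨hend.le, fun s hsp => ?_⟩)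
    rcases hsp.eq_or_lt with rfl | hsp
    · exact hσp.le
    · exact (hnear (toDual s) hsp (by simp; omega)).1.le
  have h0 : leftWindow p hend 0 = p := Fin.ext (by simp)
  refine ⟨leftWindow p hend, Or.inr fun t => by simp; omega, fun t => ?_⟩
  simp only [Function.Embedding.smul_apply, Perm.smul_def, h0, hσp]
  have := t.isLt
  exact hnear (toDual _) (by simp [Fin.lt_def]; omega) (by simp; omega)

theorem exists_isWindow_isShallow (hpeak : IsKPeak n k σ i) (hlocal : ¬ IsLocalKPeak n k m σ i) :
    ∃ a : Fin (m + 1) ↪ Fin n, IsWindow a ∧ IsShallow k (σ • a) := by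
  rcases not_and_or.1 hlocal with hR | hL
  exacts [exists_isWindow_isShallow_of_right hpeak.1 hR,
    exists_isWindow_isShallow_of_left hpeak.2 hL]

end

end Peaks

theorem tv_numKPeaks_numLocalKPeaks_general (n k m : ℕ) (hkn : k ≤ n - 1) :
    (1 / 2 : ℝ) * ∑' j : ℕ,
        |pprob n (fun σ => numKPeaks n k σ = j) -
          pprob n (fun σ => numLocalKPeaks n k m σ = j)| ≤
      3 * (n : ℝ) * ((k : ℝ) / n) ^ m := by
  calc (1 / 2 : ℝ) * ∑' j : ℕ, |pprob n (fun σ => numKPeaks n k σ = j) -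
          pprob n (fun σ => numLocalKPeaks n k m σ = j)|
      ≤ pprob n (fun σ => numKPeaks n k σ ≠ numLocalKPeaks n k m σ) := tv_le_pprob_ne _ _
    _ ≤ ∑ a ∈ {a : Fin (m + 1) ↪ Fin n | IsWindow a}, pprob n (fun σ => IsShallow k (σ • a)) :=
        pprob_le_sum _ fun σ hne => by
          obtain ⟨i, hpeak, hnotLocal⟩ := exists_isKPeak_not_isLocalKPeak hne
          obtain ⟨a, ha, hshallow⟩ := exists_isWindow_isShallow hpeak hnotLocal
          exact ⟨a, by simpa using ha, hshallow⟩
    _ ≤ ∑ _a ∈ {a : Fin (m + 1) ↪ Fin n | IsWindow a}, ((k : ℝ) / n) ^ m :=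
        sum_le_sum fun a _ => pprob_isShallow_smul_le (by omega) a
    _ ≤ 2 * n * ((k : ℝ) / n) ^ m := by
        rw [sum_const, nsmul_eq_mul]
        gcongr
        exact_mod_cast card_isWindow_le
    _ ≤ 3 * n * ((k : ℝ) / n) ^ m := by gcongr; norm_num

/-- the total variation distance between the law of the number of
`k`-peaks and the law of the number of local `k`-peaks (window `m`) is at most
`3n(k/n)^m`. -/
theorem tv_numKPeaks_numLocalKPeaks (n k m : ℕ) (hk : 1 ≤ k) (hkn : k ≤ n - 1)
    (hm : 1 ≤ m) (hn : 2 * m + 2 ≤ n) :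
    (1 / 2 : ℝ) * ∑' j : ℕ,
        |pprob n (fun σ => numKPeaks n k σ = j) -
          pprob n (fun σ => numLocalKPeaks n k m σ = j)| ≤
      3 * (n : ℝ) * ((k : ℝ) / n) ^ m :=
  tv_numKPeaks_numLocalKPeaks_general n k m hkn

end PaperKAlt
end

section
/- Fix a positive integer k and set the window size m = 3. Then there exist a constant c > 0 and an integer N such that for all n ≥ N, the number Y of local k-peaks with window 3 of a uniformly random permutation of [n] satisfies Var(Y) ≥ c·n. -/
open Filter

/-!
Cut the positions into `n / (k + 9)` consecutive blocks of length `k + 9`. A block is ascending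
if `σ` increases along it, and a peak block if it becomes ascending after the cycle
`3 → 4 → ⋯ → k + 4 → 3` of its relative positions. In both kinds of block every relative
position `t ≤ k + 7` is followed by an ascent, hence is not a local `k`-peak, except position `3`
of a peak block, whose value exceeds both neighbours by at least `k`. Turning a peak block into
an ascending one changes `σ` only within distance `3` of those positions, so it removes exactly
one local peak.

Undoing every ascending block gives a canonical form `γ`; the permutations with canonical form
`γ` are the `γ * toggle S` for the subsets `S` of the peak blocks of `γ`, with
`Y (γ * toggle S) = Y γ - #S`. On each such cube `Y` is a shifted binomial variable, so
`∑ (Y - μ)² ≥ ∑ #S / 2` there. Summing over the cubes, `Var Y` is at least half the expected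
number of ascending blocks, which is `(n / (k + 9)) / (k + 9)!`.
-/

open Finset
open scoped Nat

theorem StrictMono.val_apply_add_le {L n : ℕ} {f : Fin L → Fin n} (hf : StrictMono f)
    {i j : Fin L} (hij : i ≤ j) : (f i : ℕ) + j ≤ f j + i := by
  obtain ⟨d, hd⟩ : ∃ d, (j : ℕ) = i + d := ⟨j - i, by rw [Fin.le_def] at hij; omega⟩
  induction d generalizing j with
  | zero => rw [show j = i from Fin.ext (by omega)]
  | succ d ih =>
    have hlt : i + d < L := by omega
    have h₁ := ih (j := ⟨i + d, hlt⟩) (by rw [Fin.le_def]; simp) rfl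
    have h₂ := hf (show (⟨i + d, hlt⟩ : Fin L) < j by rw [Fin.lt_def]; simp; omega)
    rw [Fin.lt_def] at h₂
    simp only at h₁
    omega

theorem Finset.sum_powerset_card_le_two_mul_sum_sq {α : Type*} [DecidableEq α] (G : Finset α)
    (d : ℝ) : ∑ S ∈ G.powerset, (#S : ℝ) ≤ 2 * ∑ S ∈ G.powerset, ((#S : ℝ) + d) ^ 2 := by
  suffices h : ∀ d : ℝ, 2 * ∑ S ∈ G.powerset, ((#S : ℝ) + d) ^ 2 - ∑ S ∈ G.powerset, (#S : ℝ) =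
      2 ^ (#G + 1) * ((#G : ℝ) / 2 + d) ^ 2 by
    have := h d
    have : (0 : ℝ) ≤ 2 ^ (#G + 1) * ((#G : ℝ) / 2 + d) ^ 2 := by positivity
    linarith
  induction G using Finset.induction_on with
  | empty => intro d; simp
  | insert a G ha ih =>
    intro d
    have hcard (S) (hS : S ∈ G.powerset) : (#(insert a S) : ℝ) = #S + 1 := by
      rw [card_insert_of_notMem fun h => ha (mem_powerset.mp hS h)]
      push_cast
      ring
    have e₁ : ∑ S ∈ G.powerset, ((#(insert a S) : ℝ) + d) ^ 2 =
        ∑ S ∈ G.powerset, ((#S : ℝ) + (d + 1)) ^ 2 :=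
      sum_congr rfl fun S hS => by rw [hcard S hS]; ring
    have e₂ : ∑ S ∈ G.powerset, (#(insert a S) : ℝ) = ∑ S ∈ G.powerset, (#S : ℝ) + 2 ^ #G := by
      rw [sum_congr rfl hcard, sum_add_distrib, sum_const, card_powerset, nsmul_eq_mul, mul_one]
      push_cast
      ring
    rw [sum_powerset_insert ha, sum_powerset_insert ha, e₁, e₂, card_insert_of_notMem ha]
    push_cast
    linear_combination ih d + ih (d + 1)

namespace PaperKAlt

section LocalPeak

variable {n k m : ℕ} {σ σ' : Equiv.Perm (Fin n)}

theorem not_isLocalKPeak_of_lt_succ {p q : Fin n} (hq : (q : ℕ) = p + 1) (hpq : σ p < σ q) :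
    ¬ IsLocalKPeak n k m σ (σ p) := by
  rintro ⟨hR | hR, -⟩ <;> simp only [Equiv.symm_apply_apply] at hR
  · obtain ⟨j, hpj, -, -, hmax⟩ := hR
    rw [Fin.lt_def] at hpj
    exact (hmax q (by rw [Fin.le_def]; omega) (by rw [Fin.le_def]; omega)).1.not_gt hpq
  · exact (hR.2 q (by rw [Fin.le_def]; omega)).not_gt hpq

theorem isLocalKPeak_of_neighbors {a p q : Fin n} (hm : 1 ≤ m) (ha : (a : ℕ) + 1 = p)
    (hq : (q : ℕ) = p + 1) (hap : (σ a : ℕ) + k ≤ σ p) (hqp : (σ q : ℕ) + k ≤ σ p) :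
    IsLocalKPeak n k m σ (σ p) := by
  simp only [IsLocalKPeak, Equiv.symm_apply_apply]
  refine ⟨Or.inl ⟨q, by rw [Fin.lt_def]; omega, by omega, hqp, fun s hps hsq => ?_⟩,
    Or.inl ⟨a, by rw [Fin.lt_def]; omega, by omega, hap, fun s has hsp => ?_⟩⟩
  · rw [Fin.le_def] at hps hsq
    obtain rfl | rfl : s = p ∨ s = q := by omega
    all_goals simp only [Fin.le_def]; omega
  · rw [Fin.le_def] at has hsp
    obtain rfl | rfl : s = a ∨ s = p := by omega
    all_goals simp only [Fin.le_def]; omega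

theorem IsLocalKPeak.of_eqOn_window {p : Fin n}
    (heq : ∀ q : Fin n, (p : ℕ) ≤ q + m → (q : ℕ) ≤ p + m → σ q = σ' q)
    (hσ : IsLocalKPeak n k m σ (σ p)) : IsLocalKPeak n k m σ' (σ' p) := by
  have hp : σ p = σ' p := heq p (by omega) (by omega)
  simp only [IsLocalKPeak, Equiv.symm_apply_apply] at hσ ⊢
  rw [← hp]
  obtain ⟨hR, hL⟩ := hσ
  refine ⟨?_, ?_⟩
  · rcases hR with ⟨j, hpj, hjm, hjk, hmax⟩ | ⟨hn, hmax⟩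
    · have e : ∀ s : Fin n, p ≤ s → s ≤ j → σ s = σ' s := fun s hps hsj =>
        heq s (by rw [Fin.le_def] at hps; omega) (by rw [Fin.le_def] at hsj; omega)
      refine Or.inl ⟨j, hpj, hjm, e j hpj.le le_rfl ▸ hjk, fun s hps hsj => ?_⟩
      rw [← e s hps hsj, ← e j hpj.le le_rfl]
      exact hmax s hps hsj
    · refine Or.inr ⟨hn, fun s hps => ?_⟩
      rw [← heq s (by rw [Fin.le_def] at hps; omega) (by omega)]
      exact hmax s hps
  · rcases hL with ⟨j, hjp, hjm, hjk, hmax⟩ | ⟨hm, hmax⟩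
    · have e : ∀ s : Fin n, j ≤ s → s ≤ p → σ s = σ' s := fun s hjs hsp =>
        heq s (by rw [Fin.le_def] at hjs; omega) (by rw [Fin.le_def] at hsp; omega)
      refine Or.inl ⟨j, hjp, hjm, e j le_rfl hjp.le ▸ hjk, fun s hjs hsp => ?_⟩
      rw [← e s hjs hsp, ← e j le_rfl hjp.le]
      exact hmax s hjs hsp
    · refine Or.inr ⟨hm, fun s hsp => ?_⟩
      rw [Fin.le_def] at hsp
      rw [← heq s (by omega) (by omega)]
      exact hmax s hsp

theorem isLocalKPeak_iff_of_eqOn_window {p : Fin n}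
    (heq : ∀ q : Fin n, (p : ℕ) ≤ q + m → (q : ℕ) ≤ p + m → σ q = σ' q) :
    IsLocalKPeak n k m σ (σ p) ↔ IsLocalKPeak n k m σ' (σ' p) :=
  ⟨.of_eqOn_window heq, .of_eqOn_window fun q h₁ h₂ => (heq q h₁ h₂).symm⟩

open Classical in
noncomputable def localKPeakPositions (n k m : ℕ) (σ : Equiv.Perm (Fin n)) : Finset (Fin n) :=
  {p | IsLocalKPeak n k m σ (σ p)}

theorem mem_localKPeakPositions {p : Fin n} :
    p ∈ localKPeakPositions n k m σ ↔ IsLocalKPeak n k m σ (σ p) := by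
  simp [localKPeakPositions]

theorem numLocalKPeaks_eq_card_localKPeakPositions (σ : Equiv.Perm (Fin n)) :
    numLocalKPeaks n k m σ = #(localKPeakPositions n k m σ) := by
  classical
  rw [numLocalKPeaks, ← Nat.card_congr (σ.subtypeEquiv fun _ => Iff.rfl),
    Nat.card_eq_fintype_card, Fintype.card_subtype, localKPeakPositions]

end LocalPeak

section Blocks

variable {n L : ℕ}

def blockEquiv (n L : ℕ) : Fin (n / L) × Fin L ≃ {i : Fin n // (i : ℕ) < n / L * L} :=
  finProdFinEquiv.trans (Fin.castLEquiv (Nat.div_mul_le_self n L))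

def blockPos (b : Fin (n / L)) (t : Fin L) : Fin n := blockEquiv n L (b, t)

@[simp] theorem val_blockPos (b : Fin (n / L)) (t : Fin L) : (blockPos b t : ℕ) = L * b + t := by
  simp [blockPos, blockEquiv, add_comm]

theorem blockPos_inj {b b' : Fin (n / L)} {t t' : Fin L} :
    blockPos b t = blockPos b' t' ↔ b = b' ∧ t = t' := by
  rw [blockPos, blockPos, Subtype.coe_inj, (blockEquiv n L).apply_eq_iff_eq, Prod.mk.injEq]

theorem exists_blockPos_eq {p : Fin n} (hp : (p : ℕ) < n / L * L) :
    ∃ b t, blockPos (L := L) b t = p :=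
  ⟨_, _, congrArg Subtype.val ((blockEquiv n L).apply_symm_apply ⟨p, hp⟩)⟩

def blockPerm (τ : Fin (n / L) → Equiv.Perm (Fin L)) : Equiv.Perm (Fin n) :=
  Equiv.Perm.extendDomain (Equiv.prodCongrRight τ) (blockEquiv n L)

theorem blockPerm_apply_blockPos (τ : Fin (n / L) → Equiv.Perm (Fin L)) (b : Fin (n / L))
    (t : Fin L) : blockPerm τ (blockPos b t) = blockPos b (τ b t) := by
  rw [blockPerm, blockPos, Equiv.Perm.extendDomain_apply_image, Equiv.prodCongrRight_apply,
    blockPos]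

theorem blockPerm_apply_eq_self {τ : Fin (n / L) → Equiv.Perm (Fin L)} {p : Fin n}
    (h : ∀ b t, blockPos b t = p → τ b t = t) : blockPerm τ p = p := by
  by_cases hp : (p : ℕ) < n / L * L
  · obtain ⟨b, t, rfl⟩ := exists_blockPos_eq hp
    rw [blockPerm_apply_blockPos, h b t rfl]
  · exact Equiv.Perm.extendDomain_apply_not_subtype _ _ hp

def blockVals (σ : Equiv.Perm (Fin n)) (b : Fin (n / L)) (t : Fin L) : Fin n :=
  σ (blockPos b t)

theorem blockVals_injective (σ : Equiv.Perm (Fin n)) (b : Fin (n / L)) :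
    Function.Injective (blockVals σ b) := fun _ _ h =>
  (blockPos_inj.mp (σ.injective h)).2

theorem blockVals_mul_blockPerm (σ : Equiv.Perm (Fin n)) (τ : Fin (n / L) → Equiv.Perm (Fin L))
    (b : Fin (n / L)) : blockVals (σ * blockPerm τ) b = blockVals σ b ∘ τ b := by
  ext1 t
  simp only [blockVals, Equiv.Perm.mul_apply, blockPerm_apply_blockPos, Function.comp_apply]

theorem blockVals_mul_blockPerm_inv (σ : Equiv.Perm (Fin n))
    (τ : Fin (n / L) → Equiv.Perm (Fin L)) (b : Fin (n / L)) :
    blockVals (σ * (blockPerm τ)⁻¹) b = blockVals σ b ∘ ⇑(τ b)⁻¹ := by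
  ext1 t
  have h := congrFun (blockVals_mul_blockPerm (σ * (blockPerm τ)⁻¹) τ b) ((τ b)⁻¹ t)
  simpa using h.symm

def IsAscBlock (σ : Equiv.Perm (Fin n)) (b : Fin (n / L)) : Prop :=
  StrictMono (blockVals σ b)

open Classical in
noncomputable def ascBlocks (σ : Equiv.Perm (Fin n)) : Finset (Fin (n / L)) :=
  {b | IsAscBlock σ b}

theorem mem_ascBlocks {σ : Equiv.Perm (Fin n)} {b : Fin (n / L)} :
    b ∈ ascBlocks σ ↔ IsAscBlock σ b := by
  simp [ascBlocks]

theorem IsAscBlock.not_isLocalKPeak {k m : ℕ} {σ : Equiv.Perm (Fin n)} {b : Fin (n / L)}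
    (hb : IsAscBlock σ b) {t : Fin L} (ht : (t : ℕ) + 1 < L) :
    ¬ IsLocalKPeak n k m σ (σ (blockPos b t)) :=
  not_isLocalKPeak_of_lt_succ (q := blockPos b ⟨t + 1, ht⟩) (by simp; omega)
    (hb (show t < ⟨t + 1, ht⟩ by rw [Fin.lt_def]; simp))

open Classical in
theorem factorial_le_factorial_mul_card_isAscBlock (b : Fin (n / L)) :
    n ! ≤ L ! * #{σ : Equiv.Perm (Fin n) | IsAscBlock σ b} := by
  set sortBlock := fun σ : Equiv.Perm (Fin n) => Tuple.sort (blockVals σ b)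
  set sorted := fun σ : Equiv.Perm (Fin n) => σ * blockPerm (Pi.mulSingle b (sortBlock σ))
  have sorted_strictMono (σ) : StrictMono (blockVals (sorted σ) b) := by
    simp only [sorted, blockVals_mul_blockPerm, Pi.mulSingle_eq_same]
    exact (Tuple.monotone_sort _).strictMono_of_injective
      ((blockVals_injective σ b).comp (sortBlock σ).injective)
  have fiber_card (γ) : #{σ ∈ univ | sorted σ = γ} ≤ L ! := by
    calc #{σ ∈ univ | sorted σ = γ}
        ≤ #(univ : Finset (Equiv.Perm (Fin L))) := by
          refine card_le_card_of_injOn sortBlock (fun _ _ => mem_univ _) fun σ₁ h₁ σ₂ h₂ he => ?_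
          simp only [coe_filter, mem_univ, true_and, Set.mem_ofPred_eq] at h₁ h₂
          have h : sorted σ₁ = sorted σ₂ := h₁.trans h₂.symm
          simp only [sorted, he] at h
          exact mul_right_cancel h
      _ = L ! := by rw [card_univ, Fintype.card_perm, Fintype.card_fin]
  calc n ! = #(univ : Finset (Equiv.Perm (Fin n))) := by
        rw [card_univ, Fintype.card_perm, Fintype.card_fin]
    _ ≤ L ! * #(univ.image sorted) := card_le_mul_card_image _ _ fun γ _ => fiber_card γ
    _ ≤ _ := by
      gcongr
      intro γ hγ
      obtain ⟨σ, -, rfl⟩ := mem_image.mp hγ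
      exact mem_filter.mpr ⟨mem_univ _, sorted_strictMono σ⟩

theorem div_mul_factorial_le_sum_card_ascBlocks (n L : ℕ) :
    n / L * n ! ≤ L ! * ∑ σ : Equiv.Perm (Fin n), #(ascBlocks (L := L) σ) := by
  classical
  have hswap : ∑ σ : Equiv.Perm (Fin n), #(ascBlocks (L := L) σ) =
      ∑ b : Fin (n / L), #{σ : Equiv.Perm (Fin n) | IsAscBlock σ b} := by
    calc ∑ σ : Equiv.Perm (Fin n), #(ascBlocks (L := L) σ)
        = ∑ σ : Equiv.Perm (Fin n), ∑ b : Fin (n / L), if IsAscBlock σ b then 1 else 0 :=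
          sum_congr rfl fun σ _ => card_filter _ _
      _ = ∑ b : Fin (n / L), ∑ σ : Equiv.Perm (Fin n), if IsAscBlock σ b then 1 else 0 := sum_comm
      _ = _ := sum_congr rfl fun b _ => (card_filter _ _).symm
  calc n / L * n ! = ∑ _b : Fin (n / L), n ! := by simp
    _ ≤ ∑ b : Fin (n / L), L ! * #{σ : Equiv.Perm (Fin n) | IsAscBlock σ b} :=
        sum_le_sum fun b _ => factorial_le_factorial_mul_card_isAscBlock b
    _ = _ := by rw [← mul_sum, hswap]

end Blocks

def peakCycle (k : ℕ) : Equiv.Perm (Fin (k + 9)) where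
  toFun t := ⟨if (t : ℕ) < 3 ∨ k + 4 < t then t else if (t : ℕ) = k + 4 then 3 else (t : ℕ) + 1,
    by split_ifs <;> omega⟩
  invFun t := ⟨if (t : ℕ) < 3 ∨ k + 4 < t then t else if (t : ℕ) = 3 then k + 4 else (t : ℕ) - 1,
    by split_ifs <;> omega⟩
  left_inv t := by ext; dsimp only; split_ifs <;> omega
  right_inv t := by ext; dsimp only; split_ifs <;> omega

theorem val_peakCycle (k : ℕ) (t : Fin (k + 9)) : ((peakCycle k t : Fin (k + 9)) : ℕ) =
    if (t : ℕ) < 3 ∨ k + 4 < t then (t : ℕ) else if (t : ℕ) = k + 4 then 3 else (t : ℕ) + 1 :=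
  rfl

theorem val_peakCycle_inv (k : ℕ) (t : Fin (k + 9)) : (((peakCycle k)⁻¹ t : Fin (k + 9)) : ℕ) =
    if (t : ℕ) < 3 ∨ k + 4 < t then (t : ℕ) else if (t : ℕ) = 3 then k + 4 else (t : ℕ) - 1 :=
  rfl

theorem peakCycle_apply_eq_self {k : ℕ} {t : Fin (k + 9)} (ht : (t : ℕ) < 3 ∨ k + 4 < t) :
    peakCycle k t = t :=
  Fin.ext (if_pos ht)

section PeakBlocks

variable {n k : ℕ}

def IsPeakBlock (k : ℕ) (σ : Equiv.Perm (Fin n)) (b : Fin (n / (k + 9))) : Prop :=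
  StrictMono (blockVals σ b ∘ peakCycle k)

theorem IsPeakBlock.not_isLocalKPeak {m : ℕ} {σ : Equiv.Perm (Fin n)} {b : Fin (n / (k + 9))}
    (hb : IsPeakBlock k σ b) {t : Fin (k + 9)} (ht : (t : ℕ) + 1 < k + 9) (ht3 : (t : ℕ) ≠ 3) :
    ¬ IsLocalKPeak n k m σ (σ (blockPos b t)) := by
  refine not_isLocalKPeak_of_lt_succ (q := blockPos b ⟨t + 1, ht⟩) (by simp; omega) ?_
  have hval (s : Fin (k + 9)) :
      σ (blockPos b s) = (blockVals σ b ∘ peakCycle k) ((peakCycle k)⁻¹ s) := by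
    simp [blockVals]
  rw [hval, hval]
  apply hb
  rw [Fin.lt_def, val_peakCycle_inv, val_peakCycle_inv]
  simp only
  split_ifs <;> omega

theorem IsPeakBlock.isLocalKPeak {m : ℕ} (hm : 1 ≤ m) {σ : Equiv.Perm (Fin n)}
    {b : Fin (n / (k + 9))} (hb : IsPeakBlock k σ b) :
    IsLocalKPeak n k m σ (σ (blockPos b ⟨3, by omega⟩)) := by
  have hpeak : (⟨3, by omega⟩ : Fin (k + 9)) = peakCycle k ⟨k + 4, by omega⟩ :=
    Fin.ext (by simp only [val_peakCycle]; split_ifs <;> omega)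
  have h₂ := StrictMono.val_apply_add_le hb (i := ⟨2, by omega⟩) (j := ⟨k + 4, by omega⟩)
    (by rw [Fin.le_def]; simp)
  have h₃ := StrictMono.val_apply_add_le hb (i := ⟨3, by omega⟩) (j := ⟨k + 4, by omega⟩)
    (by rw [Fin.le_def]; simp)
  simp only [Function.comp_apply, blockVals] at h₂ h₃
  rw [hpeak]
  refine isLocalKPeak_of_neighbors hm (a := blockPos b (peakCycle k ⟨2, by omega⟩))
    (q := blockPos b (peakCycle k ⟨3, by omega⟩)) ?_ ?_ (by omega) (by omega)
  all_goals simp only [val_blockPos, val_peakCycle]; split_ifs <;> omega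

theorem IsPeakBlock.not_isAscBlock {σ : Equiv.Perm (Fin n)} {b : Fin (n / (k + 9))}
    (hb : IsPeakBlock k σ b) : ¬ IsAscBlock σ b := fun hasc => by
  have h₁ := hb (show (⟨3, by omega⟩ : Fin (k + 9)) < ⟨k + 4, by omega⟩ by simp [Fin.lt_def])
  have h₂ := hasc (show peakCycle k ⟨k + 4, by omega⟩ < peakCycle k ⟨3, by omega⟩ by
    simp only [Fin.lt_def, val_peakCycle]; split_ifs <;> omega)
  exact h₁.not_gt h₂

def toggle (k : ℕ) (S : Finset (Fin (n / (k + 9)))) : Equiv.Perm (Fin n) :=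
  blockPerm fun b => if b ∈ S then peakCycle k else 1

theorem blockVals_mul_toggle (σ : Equiv.Perm (Fin n)) (S : Finset (Fin (n / (k + 9))))
    (b : Fin (n / (k + 9))) : blockVals (σ * toggle k S) b =
      if b ∈ S then blockVals σ b ∘ peakCycle k else blockVals σ b := by
  rw [toggle, blockVals_mul_blockPerm]
  split_ifs <;> rfl

theorem blockVals_mul_toggle_inv (σ : Equiv.Perm (Fin n)) (S : Finset (Fin (n / (k + 9))))
    (b : Fin (n / (k + 9))) : blockVals (σ * (toggle k S)⁻¹) b =
      if b ∈ S then blockVals σ b ∘ ⇑(peakCycle k)⁻¹ else blockVals σ b := by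
  rw [toggle, blockVals_mul_blockPerm_inv]
  split_ifs <;> rfl

theorem toggle_apply_eq_self {S : Finset (Fin (n / (k + 9)))} {p : Fin n}
    (hp : ∀ b ∈ S, ∀ t : Fin (k + 9), blockPos b t = p → (t : ℕ) < 3 ∨ k + 4 < t) :
    toggle k S p = p := by
  refine blockPerm_apply_eq_self fun b t hbt => ?_
  split_ifs with hb
  · exact peakCycle_apply_eq_self (hp b hb t hbt)
  · rfl

open Classical in
noncomputable def peakBlocks (k : ℕ) (σ : Equiv.Perm (Fin n)) : Finset (Fin (n / (k + 9))) :=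
  {b | IsPeakBlock k σ b}

theorem mem_peakBlocks {σ : Equiv.Perm (Fin n)} {b : Fin (n / (k + 9))} :
    b ∈ peakBlocks k σ ↔ IsPeakBlock k σ b := by
  simp [peakBlocks]

theorem localKPeakPositions_mul_toggle {γ : Equiv.Perm (Fin n)}
    {S : Finset (Fin (n / (k + 9)))} (hS : S ⊆ peakBlocks k γ) :
    localKPeakPositions n k 3 (γ * toggle k S) =
      localKPeakPositions n k 3 γ \ S.image (blockPos · ⟨3, by omega⟩) := by
  ext p
  simp only [mem_localKPeakPositions, Finset.mem_sdiff, Finset.mem_image]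
  by_cases hp : ∃ b ∈ S, ∃ t : Fin (k + 9), (t : ℕ) ≤ k + 7 ∧ blockPos b t = p
  · obtain ⟨b, hb, t, ht, rfl⟩ := hp
    have hasc : IsAscBlock (γ * toggle k S) b := by
      rw [IsAscBlock, blockVals_mul_toggle, if_pos hb]
      exact mem_peakBlocks.mp (hS hb)
    refine iff_of_false (hasc.not_isLocalKPeak (t := t) (by omega)) fun ⟨hpeak, hnot⟩ => ?_
    by_cases ht3 : (t : ℕ) = 3
    · exact hnot ⟨b, hb, blockPos_inj.mpr ⟨rfl, Fin.ext ht3.symm⟩⟩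
    · exact (mem_peakBlocks.mp (hS hb)).not_isLocalKPeak (by omega) ht3 hpeak
  · push Not at hp
    -- A position within distance `3` of one moved by `toggle k S` would be a relative position
    -- `≤ k + 7` of a block in `S`.
    have hfix (q : Fin n) (hpq : (p : ℕ) ≤ q + 3) (hqp : (q : ℕ) ≤ p + 3) :
        (γ * toggle k S) q = γ q := by
      rw [Equiv.Perm.mul_apply, toggle_apply_eq_self fun b hb t hbt => ?_]
      have hq := congrArg Fin.val hbt
      simp only [val_blockPos] at hq
      by_contra! ht
      exact hp b hb ⟨p - (k + 9) * b, by omega⟩ (by simp only; omega)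
        (Fin.ext (by simp only [val_blockPos]; omega))
    rw [isLocalKPeak_iff_of_eqOn_window hfix]
    exact (and_iff_left fun ⟨b, hb, hbp⟩ => hp b hb _ (by simp) hbp).symm

theorem numLocalKPeaks_mul_toggle {γ : Equiv.Perm (Fin n)} {S : Finset (Fin (n / (k + 9)))}
    (hS : S ⊆ peakBlocks k γ) :
    numLocalKPeaks n k 3 (γ * toggle k S) + #S = numLocalKPeaks n k 3 γ := by
  have hsub : S.image (blockPos · ⟨3, by omega⟩) ⊆ localKPeakPositions n k 3 γ := by
    intro p hp
    obtain ⟨b, hb, rfl⟩ := mem_image.mp hp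
    exact mem_localKPeakPositions.mpr ((mem_peakBlocks.mp (hS hb)).isLocalKPeak (by norm_num))
  have hcard : #(S.image (blockPos · ⟨3, by omega⟩)) = #S :=
    card_image_of_injective _ fun b b' h => (blockPos_inj.mp h).1
  rw [numLocalKPeaks_eq_card_localKPeakPositions, numLocalKPeaks_eq_card_localKPeakPositions,
    localKPeakPositions_mul_toggle hS, card_sdiff_of_subset hsub, hcard]
  have := card_le_card hsub
  omega

noncomputable def canonicalForm (k : ℕ) (σ : Equiv.Perm (Fin n)) : Equiv.Perm (Fin n) :=
  σ * (toggle k (ascBlocks σ))⁻¹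

theorem ascBlocks_subset_peakBlocks_canonicalForm (σ : Equiv.Perm (Fin n)) :
    ascBlocks σ ⊆ peakBlocks k (canonicalForm k σ) := fun b hb => by
  rw [mem_peakBlocks, IsPeakBlock, canonicalForm, blockVals_mul_toggle_inv, if_pos hb,
    Function.comp_assoc, ← Equiv.Perm.coe_mul, inv_mul_cancel, Equiv.Perm.coe_one,
    Function.comp_id]
  exact mem_ascBlocks.mp hb

theorem ascBlocks_canonicalForm (σ : Equiv.Perm (Fin n)) :
    ascBlocks (L := k + 9) (canonicalForm k σ) = ∅ := by
  refine eq_empty_of_forall_notMem fun b hb => ?_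
  by_cases hσ : b ∈ ascBlocks σ
  · exact (mem_peakBlocks.mp (ascBlocks_subset_peakBlocks_canonicalForm σ hσ)).not_isAscBlock
      (mem_ascBlocks.mp hb)
  · rw [mem_ascBlocks, IsAscBlock, canonicalForm, blockVals_mul_toggle_inv, if_neg hσ] at hb
    exact hσ (mem_ascBlocks.mpr hb)

theorem ascBlocks_mul_toggle {γ : Equiv.Perm (Fin n)} (hγ : ascBlocks (L := k + 9) γ = ∅)
    {S : Finset (Fin (n / (k + 9)))} (hS : S ⊆ peakBlocks k γ) :
    ascBlocks (γ * toggle k S) = S := by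
  ext b
  rw [mem_ascBlocks, IsAscBlock, blockVals_mul_toggle]
  split_ifs with hb
  · exact iff_of_true (mem_peakBlocks.mp (hS hb)) hb
  · exact iff_of_false (fun h => by simpa [hγ] using mem_ascBlocks.mpr h) hb

theorem canonicalForm_mul_toggle {γ : Equiv.Perm (Fin n)} (hγ : ascBlocks (L := k + 9) γ = ∅)
    {S : Finset (Fin (n / (k + 9)))} (hS : S ⊆ peakBlocks k γ) :
    canonicalForm k (γ * toggle k S) = γ := by
  rw [canonicalForm, ascBlocks_mul_toggle hγ hS, mul_inv_cancel_right]

theorem sum_eq_sum_canonicalForm_sum_powerset {M : Type*} [AddCommMonoid M]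
    (F : Equiv.Perm (Fin n) → M) :
    ∑ σ, F σ = ∑ γ ∈ univ.image (canonicalForm k),
      ∑ S ∈ (peakBlocks k γ).powerset, F (γ * toggle k S) := by
  rw [← sum_fiberwise_of_maps_to (g := canonicalForm k)
    (fun σ _ => mem_image_of_mem _ (mem_univ σ)) F]
  refine sum_congr rfl fun γ hγ => ?_
  obtain ⟨σ₀, -, rfl⟩ := mem_image.mp hγ
  have hγ₀ := ascBlocks_canonicalForm (k := k) σ₀
  have eq_mul_toggle (σ : Equiv.Perm (Fin n)) (hσ : canonicalForm k σ = canonicalForm k σ₀) :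
      σ = canonicalForm k σ₀ * toggle k (ascBlocks σ) := by
    rw [← hσ, canonicalForm, inv_mul_cancel_right]
  refine sum_nbij' (fun σ => ascBlocks (L := k + 9) σ) (fun S => canonicalForm k σ₀ * toggle k S)
    (fun σ hσ => ?_) (fun S hS => ?_) (fun σ hσ => (eq_mul_toggle σ (mem_filter.mp hσ).2).symm)
    (fun S hS => ascBlocks_mul_toggle hγ₀ (mem_powerset.mp hS))
    (fun σ hσ => congrArg F (eq_mul_toggle σ (mem_filter.mp hσ).2))
  · rw [mem_powerset, ← (mem_filter.mp hσ).2]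
    exact ascBlocks_subset_peakBlocks_canonicalForm σ
  · exact mem_filter.mpr ⟨mem_univ _, canonicalForm_mul_toggle hγ₀ (mem_powerset.mp hS)⟩

end PeakBlocks

theorem pvar_eq_sum_sq_div_factorial (n : ℕ) (f : Equiv.Perm (Fin n) → ℝ) :
    pvar n f = (∑ σ, (f σ - pexp n f) ^ 2) / n ! := by
  rw [pvar, pexp, Fintype.card_perm, Fintype.card_fin]

theorem sum_card_ascBlocks_le_two_mul_sum_sq (n k : ℕ) (μ : ℝ) :
    ∑ σ : Equiv.Perm (Fin n), (#(ascBlocks (L := k + 9) σ) : ℝ) ≤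
      2 * ∑ σ : Equiv.Perm (Fin n), ((numLocalKPeaks n k 3 σ : ℝ) - μ) ^ 2 := by
  rw [sum_eq_sum_canonicalForm_sum_powerset (k := k) fun σ => (#(ascBlocks σ) : ℝ),
    sum_eq_sum_canonicalForm_sum_powerset (k := k) fun σ => ((numLocalKPeaks n k 3 σ : ℝ) - μ) ^ 2,
    mul_sum]
  refine sum_le_sum fun γ hγ => ?_
  obtain ⟨σ₀, -, rfl⟩ := mem_image.mp hγ
  set γ := canonicalForm k σ₀
  have hγ₀ : ascBlocks γ = ∅ := ascBlocks_canonicalForm σ₀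
  calc ∑ S ∈ (peakBlocks k γ).powerset, (#(ascBlocks (γ * toggle k S)) : ℝ)
      = ∑ S ∈ (peakBlocks k γ).powerset, (#S : ℝ) :=
        sum_congr rfl fun S hS => by rw [ascBlocks_mul_toggle hγ₀ (mem_powerset.mp hS)]
    _ ≤ 2 * ∑ S ∈ (peakBlocks k γ).powerset, ((#S : ℝ) + (μ - numLocalKPeaks n k 3 γ)) ^ 2 :=
        sum_powerset_card_le_two_mul_sum_sq _ _
    _ = 2 * ∑ S ∈ (peakBlocks k γ).powerset,
          ((numLocalKPeaks n k 3 (γ * toggle k S) : ℝ) - μ) ^ 2 := by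
      congr 1
      refine sum_congr rfl fun S hS => ?_
      rw [← numLocalKPeaks_mul_toggle (mem_powerset.mp hS)]
      push_cast
      ring

theorem div_le_pvar_numLocalKPeaks (n k : ℕ) :
    ((n / (k + 9) : ℕ) : ℝ) / (2 * (k + 9)!) ≤ pvar n (fun σ => (numLocalKPeaks n k 3 σ : ℝ)) := by
  set Y := fun σ : Equiv.Perm (Fin n) => (numLocalKPeaks n k 3 σ : ℝ)
  have hcount : ((n / (k + 9) : ℕ) : ℝ) * n ! ≤
      (k + 9)! * ∑ σ : Equiv.Perm (Fin n), (#(ascBlocks (L := k + 9) σ) : ℝ) := by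
    exact_mod_cast div_mul_factorial_le_sum_card_ascBlocks n (k + 9)
  have hvar := sum_card_ascBlocks_le_two_mul_sum_sq n k (pexp n Y)
  rw [pvar_eq_sum_sq_div_factorial, div_le_div_iff₀ (by positivity) (by positivity)]
  calc ((n / (k + 9) : ℕ) : ℝ) * n ! ≤ (k + 9)! * (2 * ∑ σ, (Y σ - pexp n Y) ^ 2) :=
        hcount.trans (by gcongr)
    _ = _ := by ring

theorem variance_numLocalKPeaks_linear_lower_general (k : ℕ) :
    ∃ c : ℝ, 0 < c ∧ ∃ N : ℕ, ∀ n : ℕ, N ≤ n →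
      c * (n : ℝ) ≤ pvar n (fun σ => (numLocalKPeaks n k 3 σ : ℝ)) := by
  refine ⟨1 / (4 * (k + 9) * (k + 9)!), by positivity, k + 9, fun n hn => ?_⟩
  have hblocks : (n : ℝ) ≤ 2 * (k + 9) * (n / (k + 9) : ℕ) := by
    have h₁ := Nat.lt_div_mul_add (a := n) (show 0 < k + 9 by omega)
    have h₂ : 1 ≤ n / (k + 9) := (Nat.one_le_div_iff (by omega)).mpr hn
    exact_mod_cast (by nlinarith : n ≤ 2 * (k + 9) * (n / (k + 9)))
  calc 1 / (4 * (k + 9) * (k + 9)!) * (n : ℝ)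
      ≤ 1 / (4 * (k + 9) * (k + 9)!) * (2 * (k + 9) * (n / (k + 9) : ℕ)) := by gcongr
    _ = ((n / (k + 9) : ℕ) : ℝ) / (2 * (k + 9)!) := by field_simp; ring
    _ ≤ _ := div_le_pvar_numLocalKPeaks n k

/-- for fixed `k` and window `m = 3`, the variance of the number of local
`k`-peaks grows at least linearly in `n`. -/
theorem variance_numLocalKPeaks_linear_lower (k : ℕ) (hk : 1 ≤ k) :
    ∃ c : ℝ, 0 < c ∧ ∃ N : ℕ, ∀ n : ℕ, N ≤ n →
      c * (n : ℝ) ≤ pvar n (fun σ => (numLocalKPeaks n k 3 σ : ℝ)) :=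
  variance_numLocalKPeaks_linear_lower_general k

end PaperKAlt
end
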